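/- arXiv:1803.08905 — 10 statements merged into one kernel-verified Lean document; each statement's English description precedes it below -/
import Mathlib

section
/- Let s, D, n be positive integers with s odd, s ≥ 3D, and Dn even, and let a_{i,k} (1 ≤ i ≤ s, 0 ≤ k ≤ n) be rational numbers such that R_n(t) = Σ_{i=1}^{s} Σ_{k=0}^{n} a_{i,k}/(t+k)^i for every real t ∉ {0, -1, …, -n}. Then for each j ∈ {1, …, D}, the series r_{n,j} = Σ_{m=1}^{∞} R_n(m + j/D) converges and equals ρ_{0,j} + Σ_{3 ≤ i ≤ s, i odd} ρ_i · ζ(i, j/D), where ρ_i = Σ_{k=0}^{n} a_{i,k} for odd i with 3 ≤ i ≤ s (independent of j), and ρ_{0,j} = -Σ_{k=0}^{n} Σ_{ℓ=0}^{k} Σ_{i=1}^{s} a_{i,k}/(ℓ + j/D)^i. -/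
/-- The rational function `R_n(t)` of Fischler–Sprang–Zudilin (depending on `s` and `D`). -/
noncomputable def R (s D n : ℕ) (t : ℝ) : ℝ :=
  (D : ℝ) ^ (3 * D * n) * (n.factorial : ℝ) ^ (s + 1 - 3 * D) *
    (∏ j ∈ Finset.range (3 * D * n + 1), (t - n + (j : ℝ) / D)) /
    (∏ j ∈ Finset.range (n + 1), (t + j)) ^ (s + 1)

/-- The Hurwitz zeta value `ζ(i, α) = ∑_{m ≥ 0} 1/(m+α)^i`, as a real number. -/
noncomputable def hurwitzZetaVal (i : ℕ) (α : ℝ) : ℝ := ∑' m : ℕ, 1 / ((m : ℝ) + α) ^ i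

/-!
Write `R_n(t) = ∑ a_{i,k} / (t + k)^i`. Since `s` is odd and `Dn` is even, `R_n(-n - t) = -R_n(t)`,
and uniqueness of partial-fraction coefficients turns this into `a_{i,n-k} = (-1)^(i+1) a_{i,k}`,
so `ρ_i = 0` for even `i`. As `R_n` has degree at most `-2`, `t R_n(t) → 0`, which gives `ρ_1 = 0`,
and the series converges absolutely. Summing term by term, `∑_{m<M} 1/(m+k+1+α)^i` differs from
`∑_{m<M} 1/(m+α)^i` by a telescoping sum tending to `-∑_{l≤k} 1/(l+α)^i`; the remaining multiples
`ρ_i ∑_{m<M} 1/(m+α)^i` tend to `ρ_i ζ(i, α)` for `i ≥ 2` and vanish for `i = 1`.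
-/

open Finset Filter Topology Polynomial

theorem summable_one_div_nat_add_pow (α : ℝ) {i : ℕ} (hi : 2 ≤ i) :
    Summable fun l : ℕ => 1 / ((l : ℝ) + α) ^ i := by
  refine Summable.of_norm ?_
  have h := (Real.summable_one_div_nat_add_rpow α i).2 (by exact_mod_cast hi)
  simpa only [norm_div, norm_one, norm_pow, Real.norm_eq_abs, Real.rpow_natCast] using h

theorem sum_range_sub_comp_add (f : ℕ → ℝ) (c M : ℕ) :
    ∑ m ∈ range M, (f (m + c) - f m) = ∑ l ∈ range c, f (M + l) - ∑ l ∈ range c, f l := by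
  induction M with
  | zero => simp
  | succ M ih =>
    have h₁ := sum_range_succ' (fun l => f (M + l)) c
    have h₂ := sum_range_succ (fun l => f (M + l)) c
    simp only [add_zero] at h₁
    simp only [sum_range_succ, ih, add_assoc M 1, add_comm 1]
    linarith

theorem tendsto_sum_range_sub_comp_add {f : ℕ → ℝ} (hf : Tendsto f atTop (𝓝 0)) (c : ℕ) :
    Tendsto (fun M => ∑ m ∈ range M, (f (m + c) - f m)) atTop (𝓝 (-∑ l ∈ range c, f l)) := by
  have h : Tendsto (fun M => ∑ l ∈ range c, f (M + l)) atTop (𝓝 0) := by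
    simpa using tendsto_finsetSum (range c) fun l _ => hf.comp (tendsto_add_atTop_nat l)
  simpa only [sum_range_sub_comp_add, zero_sub] using h.sub_const (∑ l ∈ range c, f l)

theorem summable_nat_add_of_tendsto_sq_mul {f : ℝ → ℝ}
    (hf : Tendsto (fun t => t ^ 2 * f t) atTop (𝓝 0)) (c : ℝ) :
    Summable fun m : ℕ => f (m + c) := by
  have hO : f =O[atTop] fun t => 1 / t ^ 2 := by
    refine ((hf.isBigO_one ℝ).mul (Asymptotics.isBigO_refl (fun t : ℝ => 1 / t ^ 2) _)).congr'
      ?_ (by simp)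
    filter_upwards [eventually_ne_atTop 0] with t ht
    field_simp
  have hc : Tendsto (fun m : ℕ => (m : ℝ) + c) atTop atTop :=
    tendsto_atTop_add_const_right _ c tendsto_natCast_atTop_atTop
  exact summable_of_isBigO_nat (summable_one_div_nat_add_pow c le_rfl) (hO.comp_tendsto hc)

noncomputable def partialFrac (S n : ℕ) (b : ℕ → ℕ → ℝ) (t : ℝ) : ℝ :=
  ∑ i ∈ Icc 1 S, ∑ k ∈ range (n + 1), b i k / (t + k) ^ i

theorem eventually_nhdsNE_forall_ne_neg_natCast (n k₀ : ℕ) :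
    ∀ᶠ t in 𝓝[≠] (-(k₀ : ℝ)), ∀ k ≤ n, t ≠ -(k : ℝ) := by
  have h : ∀ k : ℕ, ∀ᶠ t in 𝓝[≠] (-(k₀ : ℝ)), t ≠ -(k : ℝ) := by
    intro k
    rcases eq_or_ne k k₀ with rfl | hk
    · exact self_mem_nhdsWithin
    · exact eventually_ne_nhdsWithin (by simpa [eq_comm] using hk)
  exact (eventually_all_finite (Set.finite_Iic n)).2 fun k _ => h k

theorem tendsto_nhdsNE_pow_div_pow (k₀ k : ℕ) {N i : ℕ} (hi : i ≤ N) (hN : N ≠ 0) :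
    Tendsto (fun t : ℝ => (t + k₀) ^ N / (t + k) ^ i) (𝓝[≠] (-(k₀ : ℝ)))
      (𝓝 (if k = k₀ ∧ i = N then 1 else 0)) := by
  by_cases hk : k = k₀
  · subst hk
    have hlim : Tendsto (fun t : ℝ => (t + k) ^ (N - i)) (𝓝[≠] (-(k : ℝ)))
        (𝓝 ((-(k : ℝ) + k) ^ (N - i))) :=
      (Continuous.tendsto (by fun_prop) _).mono_left nhdsWithin_le_nhds
    rw [neg_add_cancel, zero_pow_eq] at hlim
    refine (hlim.congr' ?_).trans_eq (by simp [Nat.sub_eq_zero_iff_le, hi.ge_iff_eq', eq_comm])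
    filter_upwards [self_mem_nhdsWithin] with t ht
    rw [pow_sub₀ _ (fun h0 => ht (eq_neg_of_add_eq_zero_left h0)) hi, div_eq_mul_inv]
  · have hne : -(k₀ : ℝ) + k ≠ 0 := fun h0 =>
      hk (by exact_mod_cast (by linarith : (k : ℝ) = k₀))
    have hlim : Tendsto (fun t : ℝ => (t + k₀) ^ N / (t + k) ^ i) (𝓝[≠] (-(k₀ : ℝ)))
        (𝓝 ((-(k₀ : ℝ) + k₀) ^ N / (-(k₀ : ℝ) + k) ^ i)) :=
      ((continuousAt_id.add continuousAt_const).pow _ |>.div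
        ((continuousAt_id.add continuousAt_const).pow _) (pow_ne_zero _ hne)).tendsto.mono_left
        nhdsWithin_le_nhds
    simpa [hk, hN] using hlim

theorem partialFrac_coeff_top_eq_zero {S n : ℕ} {b : ℕ → ℕ → ℝ}
    (hb : ∀ t : ℝ, (∀ k ≤ n, t ≠ -(k : ℝ)) → partialFrac (S + 1) n b t = 0)
    {k₀ : ℕ} (hk₀ : k₀ ≤ n) : b (S + 1) k₀ = 0 := by
  have hlim : Tendsto (fun t : ℝ => ∑ i ∈ Icc 1 (S + 1), ∑ k ∈ range (n + 1),
      b i k * ((t + k₀) ^ (S + 1) / (t + k) ^ i)) (𝓝[≠] (-(k₀ : ℝ))) (𝓝 (b (S + 1) k₀)) := by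
    have h := tendsto_finsetSum (Icc 1 (S + 1)) fun i hi => tendsto_finsetSum (range (n + 1))
      fun k _ => (tendsto_nhdsNE_pow_div_pow k₀ k (mem_Icc.1 hi).2 S.succ_ne_zero).const_mul (b i k)
    simpa [ite_and, sum_ite_eq', Nat.lt_succ_iff.2 hk₀] using h
  have hzero : ∀ᶠ t in 𝓝[≠] (-(k₀ : ℝ)), ∑ i ∈ Icc 1 (S + 1), ∑ k ∈ range (n + 1),
      b i k * ((t + k₀) ^ (S + 1) / (t + k) ^ i) = 0 := by
    filter_upwards [eventually_nhdsNE_forall_ne_neg_natCast n k₀] with t ht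
    calc _ = (t + k₀) ^ (S + 1) * partialFrac (S + 1) n b t := by
          simp only [partialFrac, mul_sum]
          exact sum_congr rfl fun i _ => sum_congr rfl fun k _ => by ring
      _ = 0 := by rw [hb t ht, mul_zero]
  exact tendsto_nhds_unique hlim (tendsto_const_nhds.congr' (hzero.mono fun t h => h.symm))

theorem partialFrac_coeff_eq_zero {S n : ℕ} {b : ℕ → ℕ → ℝ}
    (hb : ∀ t : ℝ, (∀ k ≤ n, t ≠ -(k : ℝ)) → partialFrac S n b t = 0) :
    ∀ i ∈ Icc 1 S, ∀ k ≤ n, b i k = 0 := by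
  induction S with
  | zero => simp
  | succ S ih =>
    have htop : ∀ k ≤ n, b (S + 1) k = 0 := fun k hk => partialFrac_coeff_top_eq_zero hb hk
    have hb' : ∀ t : ℝ, (∀ k ≤ n, t ≠ -(k : ℝ)) → partialFrac S n b t = 0 := by
      intro t ht
      have htop_sum : ∑ k ∈ range (n + 1), b (S + 1) k / (t + k) ^ (S + 1) = 0 :=
        sum_eq_zero fun k hk => by rw [htop k (Nat.lt_succ_iff.1 (mem_range.1 hk)), zero_div]
      have hS := hb t ht
      rwa [partialFrac, sum_Icc_succ_top (by omega), htop_sum, add_zero] at hS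
    intro i hi k hk
    rcases eq_or_ne i (S + 1) with rfl | hiS
    · exact htop k hk
    · exact ih hb' i (by simp at hi ⊢; omega) k hk

theorem partialFrac_add (S n : ℕ) (b c : ℕ → ℕ → ℝ) (t : ℝ) :
    partialFrac S n (b + c) t = partialFrac S n b t + partialFrac S n c t := by
  simp only [partialFrac, Pi.add_apply, add_div, sum_add_distrib]

theorem partialFrac_neg_sub (S n : ℕ) (b : ℕ → ℕ → ℝ) (t : ℝ) :
    partialFrac S n b (-n - t) = partialFrac S n (fun i k => (-1) ^ i * b i (n - k)) t := by
  refine sum_congr rfl fun i _ => ?_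
  rw [← sum_range_reflect]
  refine sum_congr rfl fun k hk => ?_
  have hk : k ≤ n := Nat.lt_succ_iff.1 (mem_range.1 hk)
  have hpole : -(n : ℝ) - t + ((n + 1 - 1 - k : ℕ) : ℝ) = -(t + k) := by
    rw [Nat.add_sub_cancel, Nat.cast_sub hk]
    ring
  rw [hpole, Nat.add_sub_cancel, neg_pow]
  dsimp only
  rcases neg_one_pow_eq_or ℝ i with h | h <;> rw [h] <;> ring

theorem sum_coeff_eq_zero_of_even {S n : ℕ} {b : ℕ → ℕ → ℝ}
    (hodd : ∀ t : ℝ, (∀ k ≤ n, t ≠ -(k : ℝ)) → partialFrac S n b (-n - t) = -partialFrac S n b t)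
    {i : ℕ} (hi : i ∈ Icc 1 S) (heven : Even i) : ∑ k ∈ range (n + 1), b i k = 0 := by
  have hzero := partialFrac_coeff_eq_zero (b := b + fun i k => (-1) ^ i * b i (n - k))
    fun t ht => by rw [partialFrac_add, ← partialFrac_neg_sub, hodd t ht, add_neg_cancel]
  have hsum : ∑ k ∈ range (n + 1), (b i k + b i (n - k)) = 0 :=
    sum_eq_zero fun k hk => by
      simpa [heven.neg_one_pow] using hzero i hi k (Nat.lt_succ_iff.1 (mem_range.1 hk))
  have hreflect : ∑ k ∈ range (n + 1), b i (n - k) = ∑ k ∈ range (n + 1), b i k := by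
    simpa using sum_range_reflect (b i) (n + 1)
  rw [sum_add_distrib, hreflect] at hsum
  linarith

theorem tendsto_mul_div_add_pow_atTop (k : ℝ) {i : ℕ} (hi : 1 ≤ i) :
    Tendsto (fun t : ℝ => t / (t + k) ^ i) atTop (𝓝 (if i = 1 then 1 else 0)) := by
  have hfun : (fun t : ℝ => t / (t + k) ^ i) = fun t => eval t X / eval t ((X + C k) ^ i) := by
    simp
  rw [hfun]
  split_ifs with h
  · subst h
    have h := div_tendsto_atTop_leadingCoeff_div_of_degree_eq (X : ℝ[X]) (X + C k)
      (by rw [degree_X, degree_X_add_C])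
    rw [leadingCoeff_X, leadingCoeff_X_add_C, div_one] at h
    simpa using h
  · refine div_tendsto_atTop_zero_of_degree_lt _ _ ?_
    rw [degree_X, degree_pow, degree_X_add_C, nsmul_one]
    exact_mod_cast (by omega : 1 < i)

theorem tendsto_mul_partialFrac_atTop {S : ℕ} (hS : 1 ≤ S) (n : ℕ) (b : ℕ → ℕ → ℝ) :
    Tendsto (fun t => t * partialFrac S n b t) atTop (𝓝 (∑ k ∈ range (n + 1), b 1 k)) := by
  have hterm : ∀ i ∈ Icc 1 S, Tendsto (fun t => ∑ k ∈ range (n + 1), b i k * (t / (t + k) ^ i))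
      atTop (𝓝 (if i = 1 then ∑ k ∈ range (n + 1), b i k else 0)) := by
    intro i hi
    have := tendsto_finsetSum (range (n + 1)) fun k _ =>
      (tendsto_mul_div_add_pow_atTop k (mem_Icc.1 hi).1).const_mul (b i k)
    split_ifs at this ⊢ <;> simpa using this
  have hlim := tendsto_finsetSum (Icc 1 S) hterm
  rw [sum_ite_eq' (Icc 1 S) 1, if_pos (by simp [hS])] at hlim
  refine hlim.congr fun t => ?_
  simp only [partialFrac, mul_sum]
  exact sum_congr rfl fun i _ => sum_congr rfl fun k _ => by ring

theorem tendsto_sum_range_partialFrac {S n : ℕ} {b : ℕ → ℕ → ℝ}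
    (hb₁ : ∑ k ∈ range (n + 1), b 1 k = 0) (α : ℝ) :
    Tendsto (fun M => ∑ m ∈ range M, partialFrac S n b ((m : ℝ) + 1 + α)) atTop
      (𝓝 (-(∑ k ∈ range (n + 1), ∑ l ∈ range (k + 1), ∑ i ∈ Icc 1 S, b i k / ((l : ℝ) + α) ^ i) +
        ∑ i ∈ Icc 1 S, (∑ k ∈ range (n + 1), b i k) * hurwitzZetaVal i α)) := by
  let f : ℕ → ℕ → ℝ := fun i l => 1 / ((l : ℝ) + α) ^ i
  have hsplit : ∀ M, ∑ m ∈ range M, partialFrac S n b ((m : ℝ) + 1 + α) =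
      ∑ i ∈ Icc 1 S, ∑ k ∈ range (n + 1), b i k * ∑ m ∈ range M, (f i (m + (k + 1)) - f i m) +
        ∑ i ∈ Icc 1 S, (∑ k ∈ range (n + 1), b i k) * ∑ m ∈ range M, f i m := by
    intro M
    simp only [partialFrac]
    rw [← sum_add_distrib, sum_comm]
    refine sum_congr rfl fun i _ => ?_
    rw [sum_mul, ← sum_add_distrib, sum_comm]
    refine sum_congr rfl fun k _ => ?_
    rw [← mul_add, ← sum_add_distrib, mul_sum]
    refine sum_congr rfl fun m _ => ?_
    simp only [f, sub_add_cancel]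
    push_cast
    ring
  have htel : ∀ i ∈ Icc 1 S, ∀ k, Tendsto (fun M => ∑ m ∈ range M, (f i (m + (k + 1)) - f i m))
      atTop (𝓝 (-∑ l ∈ range (k + 1), f i l)) := by
    intro i hi k
    have hf : Tendsto (f i) atTop (𝓝 0) := tendsto_const_nhds.div_atTop <|
      (tendsto_pow_atTop (by simp at hi; omega)).comp
        (tendsto_atTop_add_const_right _ α tendsto_natCast_atTop_atTop)
    exact tendsto_sum_range_sub_comp_add hf (k + 1)
  have hzeta : ∀ i ∈ Icc 1 S, Tendsto (fun M => (∑ k ∈ range (n + 1), b i k) * ∑ m ∈ range M, f i m)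
      atTop (𝓝 ((∑ k ∈ range (n + 1), b i k) * hurwitzZetaVal i α)) := by
    intro i hi
    rcases eq_or_ne i 1 with rfl | hi₁
    -- `hurwitzZetaVal 1 α` is the junk value of a divergent `tsum`, but its coefficient is `0`.
    · simpa only [hb₁, zero_mul] using tendsto_const_nhds
    · exact ((summable_one_div_nat_add_pow α (by simp at hi; omega)).hasSum.tendsto_sum_nat).const_mul
        _
  have hlim := (tendsto_finsetSum _ fun i hi => tendsto_finsetSum (range (n + 1)) fun k _ =>
    (htel i hi k).const_mul (b i k)).add (tendsto_finsetSum _ hzeta)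
  convert hlim using 2
  · exact hsplit _
  · simp only [f, mul_neg, sum_neg_distrib, mul_sum, mul_one_div]
    rw [sum_comm (s := Icc 1 S)]
    exact congrArg (- · + _) (sum_congr rfl fun k _ => sum_comm)

theorem tendsto_pow_mul_prod_div_pow_prod_atTop (u v : ℕ → ℝ) {e p q r : ℕ}
    (hdeg : e + p < q * r) :
    Tendsto (fun t : ℝ => t ^ e * (∏ j ∈ range p, (t + u j)) / (∏ j ∈ range q, (t + v j)) ^ r)
      atTop (𝓝 0) := by
  have hu : (∏ j ∈ range p, (X + C (u j))).Monic :=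
    monic_prod_of_monic _ _ fun j _ => monic_X_add_C _
  have hv : (∏ j ∈ range q, (X + C (v j))).Monic :=
    monic_prod_of_monic _ _ fun j _ => monic_X_add_C _
  have hnum : (X ^ e * ∏ j ∈ range p, (X + C (u j))).natDegree = e + p := by
    rw [(monic_X_pow e).natDegree_mul hu, natDegree_X_pow,
      natDegree_prod_of_monic _ _ fun j _ => monic_X_add_C _]
    simp
  have hden : ((∏ j ∈ range q, (X + C (v j))) ^ r).natDegree = q * r := by
    rw [hv.natDegree_pow, natDegree_prod_of_monic _ _ fun j _ => monic_X_add_C _]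
    simp [mul_comm]
  convert div_tendsto_atTop_zero_of_degree_lt _ _ (degree_lt_degree (hnum.trans_lt
    (hdeg.trans_eq hden.symm))) using 2 with t
  simp [eval_prod]

theorem tendsto_pow_mul_R_atTop {s D n e : ℕ} (hdeg : e + (3 * D * n + 1) < (n + 1) * (s + 1)) :
    Tendsto (fun t : ℝ => t ^ e * R s D n t) atTop (𝓝 0) := by
  have h := (tendsto_pow_mul_prod_div_pow_prod_atTop (fun j : ℕ => (j : ℝ) / D - n)
    (fun j : ℕ => (j : ℝ)) hdeg).const_mul
      ((D : ℝ) ^ (3 * D * n) * (n.factorial : ℝ) ^ (s + 1 - 3 * D))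
  rw [mul_zero] at h
  refine h.congr fun t => ?_
  simp only [R, ← add_sub_assoc, add_sub_right_comm t]
  ring

theorem R_neg_sub {s D n : ℕ} (hs : Odd s) (hD : 0 < D) (hDn : Even (D * n)) (t : ℝ) :
    R s D n (-n - t) = -R s D n t := by
  have hnum : ∏ j ∈ range (3 * D * n + 1), (-n - t - n + (j : ℝ) / D) =
      -∏ j ∈ range (3 * D * n + 1), (t - n + (j : ℝ) / D) := by
    have hterm : ∀ j ∈ range (3 * D * n + 1),
        -n - t - n + ((3 * D * n + 1 - 1 - j : ℕ) : ℝ) / D = -(t - n + (j : ℝ) / D) := by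
      intro j hj
      rw [Nat.add_sub_cancel, Nat.cast_sub (Nat.lt_succ_iff.1 (mem_range.1 hj))]
      field_simp
      push_cast
      ring
    have heven : Even (3 * D * n) := by simpa [mul_assoc] using hDn.mul_left 3
    rw [← prod_range_reflect, prod_congr rfl hterm, prod_neg, card_range, pow_succ,
      heven.neg_one_pow, one_mul, neg_one_mul]
  have hden :
      ∏ j ∈ range (n + 1), (-n - t + j) = (-1) ^ (n + 1) * ∏ j ∈ range (n + 1), (t + j) := by
    have hterm : ∀ j ∈ range (n + 1), -n - t + ((n + 1 - 1 - j : ℕ) : ℝ) = -(t + j) := by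
      intro j hj
      rw [Nat.add_sub_cancel, Nat.cast_sub (Nat.lt_succ_iff.1 (mem_range.1 hj))]
      ring
    rw [← prod_range_reflect, prod_congr rfl hterm, prod_neg, card_range]
  simp only [R, hnum, hden, mul_pow, ← pow_mul, (hs.add_one.mul_left (n + 1)).neg_one_pow]
  ring

theorem sum_Icc_one_eq_sum_filter_odd {M : Type*} [AddCommMonoid M] {s : ℕ} {g : ℕ → M}
    (h₁ : g 1 = 0) (heven : ∀ i ∈ Icc 1 s, Even i → g i = 0) :
    ∑ i ∈ Icc 1 s, g i = ∑ i ∈ (Icc 3 s).filter (fun i => Odd i), g i := by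
  refine (sum_subset (fun i hi => ?_) fun i hi hi' => ?_).symm
  · simp only [mem_filter, mem_Icc] at hi ⊢
    omega
  · rcases Nat.even_or_odd i with hie | hio
    · exact heven i hi hie
    · simp only [mem_filter, mem_Icc] at hi hi'
      have hi3 : i < 3 := by_contra fun h => hi' ⟨⟨by omega, hi.2⟩, hio⟩
      obtain ⟨r, rfl⟩ := hio
      obtain rfl : r = 0 := by omega
      exact h₁

theorem stmt2_general (s D n : ℕ) (hs : Odd s) (hD : 0 < D) (hsD : 3 * D ≤ s)
    (hDn : Even (D * n)) (a : ℕ → ℕ → ℚ)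
    (ha : ∀ t : ℝ, (∀ k : ℕ, k ≤ n → t ≠ -(k : ℝ)) →
      R s D n t = ∑ i ∈ Finset.Icc 1 s, ∑ k ∈ Finset.range (n + 1), (a i k : ℝ) / (t + k) ^ i)
    (j : ℕ) :
    Summable (fun m : ℕ => R s D n ((m : ℝ) + 1 + (j : ℝ) / D)) ∧
    ∑' m : ℕ, R s D n ((m : ℝ) + 1 + (j : ℝ) / D) =
      (-(∑ k ∈ Finset.range (n + 1), ∑ l ∈ Finset.range (k + 1), ∑ i ∈ Finset.Icc 1 s,
          (a i k : ℝ) / ((l : ℝ) + (j : ℝ) / D) ^ i)) +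
      ∑ i ∈ (Finset.Icc 3 s).filter (fun i => Odd i),
        (∑ k ∈ Finset.range (n + 1), (a i k : ℝ)) * hurwitzZetaVal i ((j : ℝ) / D) := by
  set α : ℝ := (j : ℝ) / D
  set b : ℕ → ℕ → ℝ := fun i k => (a i k : ℝ)
  have hR : ∀ t : ℝ, (∀ k ≤ n, t ≠ -(k : ℝ)) → R s D n t = partialFrac s n b t := ha
  have hR_pos : ∀ t : ℝ, 0 < t → R s D n t = partialFrac s n b t := fun t ht =>
    hR t fun k _ h => by linarith [(Nat.cast_nonneg k : (0 : ℝ) ≤ k)]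
  have hdecay : ∀ e ≤ 2, Tendsto (fun t : ℝ => t ^ e * R s D n t) atTop (𝓝 0) :=
    fun e he => tendsto_pow_mul_R_atTop (by nlinarith)
  have hρ₁ : ∑ k ∈ range (n + 1), b 1 k = 0 := by
    refine tendsto_nhds_unique (tendsto_mul_partialFrac_atTop (S := s) (by omega) n b) ?_
    refine (hdecay 1 (by norm_num)).congr' ?_
    filter_upwards [eventually_gt_atTop 0] with t ht
    rw [pow_one, hR_pos t ht]
  have hρ_even : ∀ i ∈ Icc 1 s, Even i → ∑ k ∈ range (n + 1), b i k = 0 := by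
    refine fun i => sum_coeff_eq_zero_of_even fun t ht => ?_
    have ht' : ∀ k ≤ n, -n - t ≠ -(k : ℝ) := fun k hk h =>
      ht (n - k) (Nat.sub_le n k) (by rw [Nat.cast_sub hk]; linarith)
    rw [← hR t ht, ← hR _ ht', R_neg_sub hs hD hDn]
  have hsum : Summable fun m : ℕ => R s D n (m + 1 + α) := by
    simpa only [add_assoc] using
      summable_nat_add_of_tendsto_sq_mul (hdecay 2 le_rfl) (1 + α)
  refine ⟨hsum, (hsum.hasSum_iff_tendsto_nat.2 ?_).tsum_eq⟩
  have hterm : ∀ m : ℕ, R s D n (m + 1 + α) = partialFrac s n b (m + 1 + α) :=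
    fun m => hR_pos _ (by positivity)
  simp only [hterm]
  rw [← sum_Icc_one_eq_sum_filter_odd (by rw [hρ₁, zero_mul])
    fun i hi hie => by rw [hρ_even i hi hie, zero_mul]]
  exact tendsto_sum_range_partialFrac hρ₁ α

theorem stmt2 (s D n : ℕ) (hs : Odd s) (hD : 0 < D) (hn : 0 < n) (hsD : 3 * D ≤ s)
    (hDn : Even (D * n)) (a : ℕ → ℕ → ℚ)
    (ha : ∀ t : ℝ, (∀ k : ℕ, k ≤ n → t ≠ -(k : ℝ)) →
      R s D n t = ∑ i ∈ Finset.Icc 1 s, ∑ k ∈ Finset.range (n + 1), (a i k : ℝ) / (t + k) ^ i)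
    (j : ℕ) (hj : 1 ≤ j) (hjD : j ≤ D) :
    Summable (fun m : ℕ => R s D n ((m : ℝ) + 1 + (j : ℝ) / D)) ∧
    ∑' m : ℕ, R s D n ((m : ℝ) + 1 + (j : ℝ) / D) =
      (-(∑ k ∈ Finset.range (n + 1), ∑ l ∈ Finset.range (k + 1), ∑ i ∈ Finset.Icc 1 s,
          (a i k : ℝ) / ((l : ℝ) + (j : ℝ) / D) ^ i)) +
      ∑ i ∈ (Finset.Icc 3 s).filter (fun i => Odd i),
        (∑ k ∈ Finset.range (n + 1), (a i k : ℝ)) * hurwitzZetaVal i ((j : ℝ) / D) :=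
  stmt2_general s D n hs hD hsD hDn a ha j
end

section
/- Let s, D, n be positive integers with s odd, s ≥ 3D, and Dn even, and let a_{i,k} (1 ≤ i ≤ s, 0 ≤ k ≤ n) be rational numbers such that R_n(t) = Σ_{i=1}^{s} Σ_{k=0}^{n} a_{i,k}/(t+k)^i for every real t ∉ {0, -1, …, -n}. Then for every i with 1 ≤ i ≤ s and every k with 0 ≤ k ≤ n, the rational number d_n^{s+1-i} · a_{i,k} is an integer, where d_n = lcm(1, 2, …, n). -/
/-- `d_m = lcm(1, 2, …, m)`. -/
def dd (m : ℕ) : ℕ := (Finset.Icc 1 m).lcm id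

/-!
Put `x = t + k`. Then `x ^ (s + 1) R_n(x - k) = N(x) / W(x) ^ (s + 1)`, where `N` is the numerator
of `R_n(x - k)` and `W(x) = ∏_{j ≤ n, j ≠ k} (x + j - k)`; multiplying the partial-fraction
expansion by `x ^ (s + 1)` shows that `a_{i,k}` is the coefficient of `x ^ (s + 1 - i)` in the power
series `N / W ^ (s + 1)`. Call a power series `d`-integral when `d ^ m` times its `m`-th coefficient
is an integer for every `m`; these series form a subring. The numerator splits as
`(x - k - n) · (n!) ^ (s + 1 - 3D) · ∏_{q < 3D} P_q(x)`, each `P_q` a product of `n` consecutive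
integer linear forms, so `n!` divides its values at integers. Hence `N / W ^ (s + 1)` is a product
of the `d_n`-integral factors `x - k - n`, `P_q / W` and `n! / W`, once we know: if `P ∈ ℤ[X]` has
degree `≤ n` and `j! (n - j)!` divides `P(k - j)`, then `P / W` is `d_n`-integral. By partial
fractions, `P / W` is a constant plus the terms `c_j / (x + j - k)` with
`c_j = (-1)^j (k - j) P(k - j) / (j! (n - j)!) ∈ (k - j) ℤ`, and `(k - j) / (x + j - k)` expands
into `±∑ (x / (k - j)) ^ m`, which is `d_n`-integral because `k - j ∣ d_n`.
-/

open Polynomial Finset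
open scoped Nat PowerSeries

theorem Finset.prod_range_mul_eq_prod_prod {M : Type*} [CommMonoid M] (f : ℕ → M) (a b : ℕ) :
    ∏ j ∈ range (a * b), f j = ∏ q ∈ range a, ∏ l ∈ range b, f (q * b + l) := by
  induction a with
  | zero => simp
  | succ a ih => rw [Nat.succ_mul, prod_range_add, ih, prod_range_succ]

theorem Finset.prod_range_erase_natCast_sub {R : Type*} [CommRing R] {n j : ℕ} (hj : j ≤ n) :
    ∏ i ∈ (range (n + 1)).erase j, ((i : R) - j) = (-1) ^ j * j ! * (n - j)! := by
  have hsplit : (range (n + 1)).erase j = range j ∪ Ico (j + 1) (n + 1) := by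
    ext; simp only [mem_erase, mem_range, mem_union, mem_Ico]; omega
  have hdisj : Disjoint (range j) (Ico (j + 1) (n + 1)) :=
    disjoint_left.2 fun i hi hi' => by simp only [mem_range, mem_Ico] at hi hi'; omega
  have hbelow : ∏ i ∈ range j, ((i : R) - j) = (-1) ^ j * j ! := by
    simp_rw [← neg_sub (j : R), prod_neg, card_range, ← descPochhammer_eval_eq_prod_range,
      descPochhammer_eval_eq_descFactorial, Nat.descFactorial_self]
  have habove : ∏ i ∈ Ico (j + 1) (n + 1), ((i : R) - j) = (n - j)! := by
    rw [prod_Ico_eq_prod_range, show n + 1 - (j + 1) = n - j by omega,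
      ← prod_range_add_one_eq_factorial, Nat.cast_prod]
    exact prod_congr rfl fun i _ => by push_cast; ring
  rw [hsplit, prod_union hdisj, hbelow, habove]

theorem Finset.prod_pow_mul_sum_sum_div_pow {K ι : Type*} [Field K] [DecidableEq ι]
    {T : Finset ι} {y : ι → K} (hy : ∀ j ∈ T, y j ≠ 0) (a : ℕ → ι → K) (s : ℕ) :
    (∏ j ∈ T, y j) ^ (s + 1) * ∑ i ∈ Icc 1 s, ∑ k ∈ T, a i k / y k ^ i
      = ∑ i ∈ Icc 1 s, ∑ k ∈ T, a i k * y k ^ (s + 1 - i) * (∏ j ∈ T.erase k, y j) ^ (s + 1) := by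
  simp_rw [mul_sum]
  refine sum_congr rfl fun i hi => sum_congr rfl fun k hk => ?_
  have hpow : y k ^ (s + 1) = y k ^ (s + 1 - i) * y k ^ i := by
    rw [← pow_add, Nat.sub_add_cancel (by simp only [mem_Icc] at hi; omega)]
  have hyk := hy k hk
  rw [← mul_prod_erase T y hk, mul_pow, hpow]
  field_simp

theorem Int.factorial_dvd_prod_range_add (k : ℕ) (M : ℤ) :
    (k ! : ℤ) ∣ ∏ i ∈ Finset.range k, (M + i) := by
  have hchoose := Ring.descPochhammer_eq_factorial_smul_choose (-M) k
  rw [← Polynomial.eval_eq_smeval, descPochhammer_eval_eq_prod_range, nsmul_eq_mul] at hchoose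
  have hneg : ∏ i ∈ Finset.range k, (M + i) = (-1) ^ k * ∏ i ∈ Finset.range k, (-M - i) := by
    simpa only [neg_sub', sub_neg_eq_add, neg_neg, Finset.card_range] using
      (Finset.prod_neg (s := Finset.range k) fun i : ℕ => -M - i)
  rw [hneg, hchoose]
  exact Dvd.intro _ rfl |>.mul_left _

theorem Polynomial.eq_of_aeval_eq_of_finite {K L : Type*} [Field K] [Field L] [Algebra K L]
    [Infinite L] {p q : K[X]} {S : Set L} (hS : S.Finite) (h : ∀ x ∉ S, aeval x p = aeval x q) :
    p = q := by
  apply map_injective (algebraMap K L) (algebraMap K L).injective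
  apply eq_of_infinite_eval_eq
  refine hS.infinite_compl.mono fun x hx => ?_
  simpa [eval_map_algebraMap] using h x hx

namespace PowerSeries

/-- The `d`-integral power series, as the preimage of `ℤ⟦X⟧` under `f(X) ↦ f(d X)`. -/
noncomputable def rescaleIntegral (d : ℚ) : Subring ℚ⟦X⟧ :=
  (map (Int.castRingHom ℚ)).range.comap (rescale d)

theorem mem_rescaleIntegral {d : ℚ} {f : ℚ⟦X⟧} :
    f ∈ rescaleIntegral d ↔ ∀ m, ∃ z : ℤ, d ^ m * coeff m f = z := by
  simp only [rescaleIntegral, Subring.mem_comap, RingHom.mem_range]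
  constructor
  · rintro ⟨g, hg⟩ m
    exact ⟨coeff m g, by rw [← coeff_rescale, ← hg, coeff_map, eq_intCast]⟩
  · intro h
    choose z hz using h
    exact ⟨mk z, by ext m; rw [coeff_map, coeff_mk, coeff_rescale, hz, eq_intCast]⟩

theorem coe_map_intCast_mem_rescaleIntegral (d : ℤ) (P : ℤ[X]) :
    ((P.map (Int.castRingHom ℚ) : ℚ[X]) : ℚ⟦X⟧) ∈ rescaleIntegral d :=
  mem_rescaleIntegral.2 fun m =>
    ⟨d ^ m * P.coeff m, by simp [Polynomial.coeff_coe]⟩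

theorem inv_X_sub_C {K : Type*} [Field K] {v : K} (hv : v ≠ 0) :
    (X - C v)⁻¹ = mk fun m => -(v ^ (m + 1))⁻¹ := by
  rw [PowerSeries.inv_eq_iff_mul_eq_one (by simpa using hv)]
  ext (_ | m)
  · simp [hv]
  · rw [mul_sub, map_sub, coeff_succ_mul_X, mul_comm, coeff_C_mul, coeff_mk, coeff_mk,
      coeff_one, if_neg m.succ_ne_zero]
    field_simp
    ring

theorem C_mul_inv_X_sub_C_mem_rescaleIntegral {d v : ℤ} (hv : v ≠ 0) (hvd : v ∣ d) (z : ℤ) :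
    C ((z : ℚ) * v) * (X - C (v : ℚ))⁻¹ ∈ rescaleIntegral d := by
  obtain ⟨e, rfl⟩ := hvd
  refine mem_rescaleIntegral.2 fun m => ⟨-z * e ^ m, ?_⟩
  rw [inv_X_sub_C (by exact_mod_cast hv), coeff_C_mul, coeff_mk]
  have hv' : (v : ℚ) ≠ 0 := by exact_mod_cast hv
  push_cast
  field_simp
  ring

end PowerSeries

namespace Lagrange

variable {K ι : Type*} [Field K] {T : Finset ι} {v : ι → K}

theorem constantCoeff_coe_nodal_ne_zero (hv : ∀ i ∈ T, v i ≠ 0) :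
    PowerSeries.constantCoeff (nodal T v : K⟦X⟧) ≠ 0 := by
  rw [← PowerSeries.coeff_zero_eq_constantCoeff_apply, coeff_coe, coeff_zero_eq_eval_zero,
    eval_nodal, prod_ne_zero_iff]
  exact fun i hi => by simpa using hv i hi

variable [DecidableEq ι] {k : ι}

theorem nodalWeight_eq_inv_sub_mul_nodalWeight_erase {i j : ι} (hi : i ∈ T) (hij : i ≠ j) :
    nodalWeight T v j = (v j - v i)⁻¹ * nodalWeight (T.erase i) v j := by
  rw [nodalWeight, nodalWeight, ← mul_prod_erase (T.erase j) _ (mem_erase.2 ⟨hij, hi⟩),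
    erase_right_comm]

theorem eq_C_mul_nodal_add_sum_nodal_erase (hvs : Set.InjOn v T) {f : K[X]}
    (hf : f.natDegree ≤ #T) :
    f = C (f.coeff #T) * nodal T v
      + ∑ i ∈ T, C (nodalWeight T v i * f.eval (v i)) * nodal (T.erase i) v := by
  set ρ := f - C (f.coeff #T) * nodal T v with hρ
  have hρdeg : ρ.degree < #T := by
    rw [degree_lt_iff_coeff_zero]
    intro m hm
    rcases hm.eq_or_lt with rfl | hlt
    · rw [hρ, coeff_sub, coeff_C_mul, ← natDegree_nodal (v := v),
        nodal_monic.coeff_natDegree, mul_one, sub_self]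
    · have hnodal : (nodal T v).coeff m = 0 :=
        coeff_eq_zero_of_natDegree_lt (by rwa [natDegree_nodal])
      rw [hρ, coeff_sub, coeff_C_mul, coeff_eq_zero_of_natDegree_lt (hf.trans_lt hlt), hnodal,
        mul_zero, sub_zero]
  rw [← sub_eq_iff_eq_add', ← hρ, eq_interpolate hvs hρdeg, interpolate_apply]
  refine sum_congr rfl fun i hi => ?_
  rw [basis_eq_prod_sub_inv_mul_nodal_div hi, ← nodal_erase_eq_nodal_div hi, ← mul_assoc, ← C_mul,
    hρ, eval_sub, eval_mul, eval_nodal_at_node hi, mul_zero, sub_zero, mul_comm (eval _ _)]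

theorem coe_nodal_erase_mul_inv_coe_nodal (hv : ∀ i ∈ T, v i ≠ 0) {i : ι} (hi : i ∈ T) :
    (nodal (T.erase i) v : K⟦X⟧) * (nodal T v : K⟦X⟧)⁻¹
      = (PowerSeries.X - PowerSeries.C (v i))⁻¹ := by
  have hi' := constantCoeff_coe_nodal_ne_zero (T := T.erase i)
    fun j hj => hv j (mem_of_mem_erase hj)
  rw [nodal_eq_mul_nodal_erase hi, Polynomial.coe_mul, PowerSeries.mul_inv_rev, ← mul_assoc,
    PowerSeries.mul_inv_cancel _ hi', one_mul, Polynomial.coe_sub, coe_X, coe_C]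

theorem coe_mul_inv_coe_nodal_eq (hvs : Set.InjOn v T) (hv : ∀ i ∈ T, v i ≠ 0) {f : K[X]}
    (hf : f.natDegree ≤ #T) :
    (f : K⟦X⟧) * (nodal T v : K⟦X⟧)⁻¹ = PowerSeries.C (f.coeff #T)
      + ∑ i ∈ T, PowerSeries.C (nodalWeight T v i * f.eval (v i))
          * (PowerSeries.X - PowerSeries.C (v i))⁻¹ := by
  conv_lhs => rw [eq_C_mul_nodal_add_sum_nodal_erase hvs hf]
  simp only [← coeToPowerSeries.ringHom_apply, map_add, map_sum, add_mul, sum_mul]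
  simp only [coeToPowerSeries.ringHom_apply, Polynomial.coe_mul, coe_C, mul_assoc,
    PowerSeries.mul_inv_cancel _ (constantCoeff_coe_nodal_ne_zero hv), mul_one]
  congr 1
  exact sum_congr rfl fun i hi => by rw [coe_nodal_erase_mul_inv_coe_nodal hv hi]

/-- The numerator of `∑_{1 ≤ i ≤ s} ∑_{k ∈ T} a i k / (X - v k) ^ i` over the common denominator
`nodal T v ^ (s + 1)`. -/
noncomputable def clearedPartialFractions (T : Finset ι) (v : ι → K) (a : ℕ → ι → K) (s : ℕ) :
    K[X] :=
  ∑ i ∈ Icc 1 s, ∑ k ∈ T, C (a i k) * (X - C (v k)) ^ (s + 1 - i) * nodal (T.erase k) v ^ (s + 1)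

theorem exists_clearedPartialFractions_eq_add_X_pow_mul (hk : k ∈ T) (hvk : v k = 0)
    (a : ℕ → ι → K) (s : ℕ) :
    ∃ G : K[X], clearedPartialFractions T v a s
      = (∑ i ∈ Icc 1 s, C (a i k) * X ^ (s + 1 - i)) * nodal (T.erase k) v ^ (s + 1)
        + X ^ (s + 1) * G := by
  set f : ℕ → ι → K[X] := fun i k' =>
    C (a i k') * (X - C (v k')) ^ (s + 1 - i) * nodal (T.erase k') v ^ (s + 1)
  have hsplit : clearedPartialFractions T v a s
      = (∑ i ∈ Icc 1 s, C (a i k) * X ^ (s + 1 - i)) * nodal (T.erase k) v ^ (s + 1)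
        + ∑ i ∈ Icc 1 s, ∑ k' ∈ T.erase k, f i k' := by
    rw [clearedPartialFractions, sum_mul, ← sum_add_distrib]
    refine sum_congr rfl fun i _ => ?_
    rw [← add_sum_erase T _ hk]
    simp only [f, hvk, map_zero, sub_zero]
  have hdvd : X ^ (s + 1) ∣ ∑ i ∈ Icc 1 s, ∑ k' ∈ T.erase k, f i k' := by
    refine dvd_sum fun i _ => dvd_sum fun k' hk' => dvd_mul_of_dvd_right (pow_dvd_pow_of_dvd ?_ _) _
    simpa [hvk] using X_sub_C_dvd_nodal v (mem_erase.2 ⟨(ne_of_mem_erase hk').symm, hk⟩)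
  obtain ⟨G, hG⟩ := hdvd
  exact ⟨G, hsplit.trans (by rw [hG])⟩

theorem coeff_clearedPartialFractions_mul_inv_pow (hk : k ∈ T) (hvk : v k = 0)
    (hv : ∀ j ∈ T, j ≠ k → v j ≠ 0) (a : ℕ → ι → K) {s i : ℕ} (hi : i ∈ Icc 1 s) :
    PowerSeries.coeff (s + 1 - i) ((clearedPartialFractions T v a s : K⟦X⟧)
      * (nodal (T.erase k) v : K⟦X⟧)⁻¹ ^ (s + 1)) = a i k := by
  obtain ⟨G, hG⟩ := exists_clearedPartialFractions_eq_add_X_pow_mul hk hvk a s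
  have hW := constantCoeff_coe_nodal_ne_zero (T := T.erase k) (v := v)
    fun j hj => hv j (mem_of_mem_erase hj) (ne_of_mem_erase hj)
  have hWW : (nodal (T.erase k) v : K⟦X⟧) ^ (s + 1) * (nodal (T.erase k) v : K⟦X⟧)⁻¹ ^ (s + 1)
      = 1 := by
    rw [← mul_pow, PowerSeries.mul_inv_cancel _ hW, one_pow]
  simp only [mem_Icc] at hi
  rw [hG, Polynomial.coe_add, Polynomial.coe_mul, Polynomial.coe_mul, Polynomial.coe_pow,
    Polynomial.coe_pow, coe_X, add_mul, mul_assoc, hWW, mul_one, map_add, mul_assoc,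
    PowerSeries.coeff_X_pow_mul', if_neg (by omega), add_zero, Polynomial.coeff_coe,
    finsetSum_coeff, sum_eq_single_of_mem i (mem_Icc.2 hi)]
  · rw [coeff_C_mul_X_pow, if_pos rfl]
  · intro i' hi' _
    rw [coeff_C_mul_X_pow, if_neg (by simp only [mem_Icc] at hi'; omega)]

end Lagrange

namespace FischlerSprangZudilin

open PowerSeries (rescaleIntegral)

/-- In the variable `x = t + k`, the pole `t = -j` of `R_n` sits at `x = node k j`. -/
def node (k j : ℕ) : ℚ := k - j

theorem node_injective (k : ℕ) : Function.Injective (node k) := fun j j' h => by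
  simpa [node] using h

theorem node_self (k : ℕ) : node k k = 0 := sub_self _

theorem node_ne_zero {k j : ℕ} (h : j ≠ k) : node k j ≠ 0 := by
  simpa [node, sub_eq_zero] using Ne.symm h

/-- The denominator of `R_n(x - k)` is `(x · cofactor n k) ^ (s + 1)`. -/
noncomputable def cofactor (n k : ℕ) : ℚ[X] := Lagrange.nodal ((range (n + 1)).erase k) (node k)

theorem nodalWeight_node_mul {n k j : ℕ} (hk : k ≤ n) (hj : j ≤ n) (hjk : j ≠ k) :
    Lagrange.nodalWeight ((range (n + 1)).erase k) (node k) j * (j ! * (n - j)!)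
      = (-1) ^ j * node k j := by
  have hfull : Lagrange.nodalWeight (range (n + 1)) (node k) j
      = ((-1) ^ j * j ! * (n - j)! : ℚ)⁻¹ := by
    rw [Lagrange.nodalWeight, ← prod_range_erase_natCast_sub hj, ← prod_inv_distrib]
    exact prod_congr rfl fun i _ => by rw [node, node]; ring
  have h := Lagrange.nodalWeight_eq_inv_sub_mul_nodalWeight_erase (v := node k)
    (mem_range.2 (Nat.lt_succ_of_le hk)) (Ne.symm hjk)
  rw [hfull, node_self, sub_zero,
    eq_inv_mul_iff_mul_eq₀ (node_ne_zero hjk)] at h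
  rw [← h, mul_inv, mul_inv, ← inv_pow, inv_neg, inv_one]
  field_simp

theorem sub_dvd_dd {n i j : ℕ} (hi : i ≤ n) (hj : j ≤ n) (hij : i ≠ j) : ((i : ℤ) - j) ∣ dd n := by
  have hmem : ((i : ℤ) - j).natAbs ∈ Icc 1 n := by
    simp only [mem_Icc]; omega
  rw [← Int.natAbs_dvd, Int.natCast_dvd_natCast]
  exact Finset.dvd_lcm (f := id) hmem

theorem coe_map_mul_inv_cofactor_mem {n k : ℕ} (hk : k ≤ n) {P : ℤ[X]} (hdeg : P.natDegree ≤ n)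
    (hdvd : ∀ j ≤ n, j ≠ k → ((j ! * (n - j)! : ℕ) : ℤ) ∣ P.eval ((k : ℤ) - j)) :
    ((P.map (Int.castRingHom ℚ) : ℚ[X]) : ℚ⟦X⟧) * (cofactor n k : ℚ⟦X⟧)⁻¹
      ∈ rescaleIntegral (dd n : ℤ) := by
  have hcard : #((range (n + 1)).erase k) = n := by
    rw [card_erase_of_mem (mem_range.2 (by omega)), card_range, Nat.add_sub_cancel]
  rw [cofactor, Lagrange.coe_mul_inv_coe_nodal_eq (node_injective k).injOn
    (fun j hj => node_ne_zero (ne_of_mem_erase hj))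
    (by rw [hcard]; exact natDegree_map_le.trans hdeg)]
  refine add_mem ?_ (sum_mem fun j hj => ?_)
  · rw [coeff_map, eq_intCast, map_intCast]
    exact intCast_mem _ _
  obtain ⟨hjk, hj⟩ := mem_erase.1 hj
  have hjn : j ≤ n := Nat.lt_succ_iff.1 (mem_range.1 hj)
  obtain ⟨e, he⟩ := hdvd j hjn hjk
  have hnode : node k j = ((k - j : ℤ) : ℚ) := by push_cast; rfl
  convert PowerSeries.C_mul_inv_X_sub_C_mem_rescaleIntegral (z := (-1) ^ j * e)
    (sub_ne_zero.2 (Nat.cast_injective.ne (Ne.symm hjk))) (sub_dvd_dd hk hjn (Ne.symm hjk)) using 3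
  · rw [hnode, eval_intCast_map, eq_intCast, Int.cast_id, he, ← hnode]
    have hw := nodalWeight_node_mul hk hjn hjk
    push_cast
    linear_combination (e : ℚ) * hw
  · rw [hnode]

/-- `D ^ n ∏_{l < n} (x - k - n + (q n + l + 1) / D)`: besides `x - k - n`, the `3Dn + 1` linear
factors of the numerator of `R_n(x - k)` fall into `3D` such blocks of `n` consecutive ones. -/
noncomputable def block (D n k q : ℕ) : ℤ[X] :=
  ∏ l ∈ range n, (C (D : ℤ) * X + C (((q * n + l + 1 : ℕ) : ℤ) - D * (k + n)))

theorem natDegree_block_le (D n k q : ℕ) : (block D n k q).natDegree ≤ n := by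
  refine (natDegree_prod_le _ _).trans ((sum_le_card_nsmul _ _ 1 fun l _ => ?_).trans (by simp))
  exact natDegree_linear_le

theorem factorial_dvd_eval_block (D n k q : ℕ) (x : ℤ) : (n ! : ℤ) ∣ (block D n k q).eval x := by
  convert Int.factorial_dvd_prod_range_add n (D * x + q * n + 1 - D * (k + n)) using 1
  simp only [block, eval_prod, eval_add, eval_mul, eval_C, eval_X]
  exact prod_congr rfl fun l _ => by push_cast; ring

noncomputable def shiftedNumerator (s D n k : ℕ) : ℤ[X] :=
  (X - C ((k + n : ℕ) : ℤ)) * (∏ q ∈ range (3 * D), block D n k q) * C (n ! : ℤ) ^ (s + 1 - 3 * D)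

theorem coe_map_shiftedNumerator_mul_inv_cofactor_pow_mem {s D n k : ℕ} (hk : k ≤ n)
    (hsD : 3 * D ≤ s) :
    (((shiftedNumerator s D n k).map (Int.castRingHom ℚ) : ℚ[X]) : ℚ⟦X⟧)
        * (cofactor n k : ℚ⟦X⟧)⁻¹ ^ (s + 1) ∈ rescaleIntegral (dd n : ℤ) := by
  set W' := (cofactor n k : ℚ⟦X⟧)⁻¹
  have hfact : ∀ j ≤ n, ((j ! * (n - j)! : ℕ) : ℤ) ∣ (n ! : ℤ) := fun j hj =>
    Int.natCast_dvd_natCast.2 (Nat.factorial_mul_factorial_dvd_factorial hj)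
  have hrearrange :
      (((shiftedNumerator s D n k).map (Int.castRingHom ℚ) : ℚ[X]) : ℚ⟦X⟧) * W' ^ (s + 1)
      = (((X - C ((k + n : ℕ) : ℤ)).map (Int.castRingHom ℚ) : ℚ[X]) : ℚ⟦X⟧)
        * (∏ q ∈ range (3 * D), ((((block D n k q).map (Int.castRingHom ℚ) : ℚ[X]) : ℚ⟦X⟧) * W'))
        * ((((C (n ! : ℤ)).map (Int.castRingHom ℚ) : ℚ[X]) : ℚ⟦X⟧) * W') ^ (s + 1 - 3 * D) := by
    have hpow : W' ^ (s + 1) = W' ^ (3 * D) * W' ^ (s + 1 - 3 * D) := by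
      rw [← pow_add, Nat.add_sub_of_le (by omega)]
    rw [shiftedNumerator, hpow, prod_mul_distrib, prod_const, card_range, mul_pow]
    simp only [← coeToPowerSeries.ringHom_apply, Polynomial.map_mul, Polynomial.map_pow,
      Polynomial.map_prod, map_mul, map_pow, map_prod]
    ring
  rw [hrearrange]
  refine mul_mem (mul_mem (PowerSeries.coe_map_intCast_mem_rescaleIntegral _ _)
    (prod_mem fun q _ => ?_)) (pow_mem ?_ _)
  · exact coe_map_mul_inv_cofactor_mem hk (natDegree_block_le D n k q)
      fun j hj _ => (hfact j hj).trans (factorial_dvd_eval_block D n k q _)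
  · exact coe_map_mul_inv_cofactor_mem hk (by simp) fun j hj _ => by simpa using hfact j hj

theorem aeval_shiftedNumerator (s : ℕ) {D : ℕ} (hD : D ≠ 0) (n k : ℕ) (x : ℝ) :
    aeval x (shiftedNumerator s D n k)
      = (D : ℝ) ^ (3 * D * n) * (n ! : ℝ) ^ (s + 1 - 3 * D)
          * ∏ j ∈ range (3 * D * n + 1), (x - k - n + (j : ℝ) / D) := by
  have hD' : (D : ℝ) ≠ 0 := Nat.cast_ne_zero.2 hD
  have hblocks :
      (D : ℝ) ^ (3 * D * n) * ∏ j ∈ range (3 * D * n), (x - k - n + ((j + 1 : ℕ) : ℝ) / D)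
      = ∏ q ∈ range (3 * D), ∏ l ∈ range n, (D * x + ((q : ℝ) * n + l + 1 - D * (k + n))) := by
    rw [← card_range (3 * D * n), ← prod_const, card_range, ← prod_mul_distrib,
      prod_range_mul_eq_prod_prod]
    refine prod_congr rfl fun q _ => prod_congr rfl fun l _ => ?_
    field_simp
    push_cast
    ring
  simp only [shiftedNumerator, block, map_mul, map_pow, map_prod, map_sub, map_add, aeval_X,
    aeval_C]
  push_cast
  rw [prod_range_succ', Nat.cast_zero, zero_div, add_zero, ← hblocks]
  ring

theorem map_shiftedNumerator_eq_clearedPartialFractions {s D n : ℕ} (hD : D ≠ 0) {a : ℕ → ℕ → ℚ}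
    (ha : ∀ t : ℝ, (∀ k : ℕ, k ≤ n → t ≠ -(k : ℝ)) →
      R s D n t = ∑ i ∈ Icc 1 s, ∑ k ∈ range (n + 1), (a i k : ℝ) / (t + k) ^ i) (k : ℕ) :
    (shiftedNumerator s D n k).map (Int.castRingHom ℚ)
      = Lagrange.clearedPartialFractions (range (n + 1)) (node k) a s := by
  refine eq_of_aeval_eq_of_finite (L := ℝ)
    ((range (n + 1)).finite_toSet.image fun j : ℕ => (k : ℝ) - j) fun x hx => ?_
  set y : ℕ → ℝ := fun j => x - k + j
  have hy : ∀ j ∈ range (n + 1), y j ≠ 0 := fun j hj h =>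
    hx ⟨j, hj, by simp only [y] at h; linarith⟩
  have hprod : (∏ j ∈ range (n + 1), y j) ^ (s + 1) ≠ 0 := pow_ne_zero _ (prod_ne_zero_iff.2 hy)
  have hR := ha (x - k) fun j hj h => hy j (mem_range.2 (by omega)) (by simp [y, h])
  calc aeval x ((shiftedNumerator s D n k).map (Int.castRingHom ℚ))
      = R s D n (x - k) * (∏ j ∈ range (n + 1), y j) ^ (s + 1) := by
        rw [← algebraMap_int_eq, aeval_map_algebraMap, aeval_shiftedNumerator s hD, R,
          div_mul_cancel₀ _ hprod]
    _ = (∏ j ∈ range (n + 1), y j) ^ (s + 1)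
          * ∑ i ∈ Icc 1 s, ∑ k' ∈ range (n + 1), (a i k' : ℝ) / y k' ^ i := by
        rw [hR, mul_comm]
    _ = ∑ i ∈ Icc 1 s, ∑ k' ∈ range (n + 1),
          (a i k' : ℝ) * y k' ^ (s + 1 - i) * (∏ j ∈ (range (n + 1)).erase k', y j) ^ (s + 1) :=
        prod_pow_mul_sum_sum_div_pow hy _ s
    _ = aeval x (Lagrange.clearedPartialFractions (range (n + 1)) (node k) a s) := by
        simp [Lagrange.clearedPartialFractions, Lagrange.nodal, node, y, sub_sub_eq_add_sub,
          sub_add_eq_add_sub]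

end FischlerSprangZudilin

theorem stmt3_general (s D n : ℕ) (hD : 0 < D) (hsD : 3 * D ≤ s) (a : ℕ → ℕ → ℚ)
    (ha : ∀ t : ℝ, (∀ k : ℕ, k ≤ n → t ≠ -(k : ℝ)) →
      R s D n t = ∑ i ∈ Finset.Icc 1 s, ∑ k ∈ Finset.range (n + 1), (a i k : ℝ) / (t + k) ^ i)
    (i : ℕ) (hi1 : 1 ≤ i) (his : i ≤ s) (k : ℕ) (hk : k ≤ n) :
    ∃ z : ℤ, (dd n : ℚ) ^ (s + 1 - i) * a i k = (z : ℚ) := by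
  obtain ⟨z, hz⟩ := PowerSeries.mem_rescaleIntegral.1
    (FischlerSprangZudilin.coe_map_shiftedNumerator_mul_inv_cofactor_pow_mem hk hsD) (s + 1 - i)
  rw [FischlerSprangZudilin.map_shiftedNumerator_eq_clearedPartialFractions hD.ne' ha,
    FischlerSprangZudilin.cofactor,
    Lagrange.coeff_clearedPartialFractions_mul_inv_pow (mem_range.2 (Nat.lt_succ_of_le hk))
      (FischlerSprangZudilin.node_self k) (fun j _ hj => FischlerSprangZudilin.node_ne_zero hj) a
      (mem_Icc.2 ⟨hi1, his⟩),
    Int.cast_natCast] at hz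
  exact ⟨z, hz⟩

theorem stmt3 (s D n : ℕ) (hs : Odd s) (hD : 0 < D) (hn : 0 < n) (hsD : 3 * D ≤ s)
    (hDn : Even (D * n)) (a : ℕ → ℕ → ℚ)
    (ha : ∀ t : ℝ, (∀ k : ℕ, k ≤ n → t ≠ -(k : ℝ)) →
      R s D n t = ∑ i ∈ Finset.Icc 1 s, ∑ k ∈ Finset.range (n + 1), (a i k : ℝ) / (t + k) ^ i)
    (i : ℕ) (hi1 : 1 ≤ i) (his : i ≤ s) (k : ℕ) (hk : k ≤ n) :
    ∃ z : ℤ, (dd n : ℚ) ^ (s + 1 - i) * a i k = (z : ℚ) :=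
  stmt3_general s D n hD hsD a ha i hi1 his k hk
end

section
/- Let s, D, n be positive integers with s odd, s ≥ 3D, and Dn even. Then R_n(-n-t) = -R_n(t) for every real t such that both sides are defined (i.e., t ∉ {0, -1, …, -n} and -n-t ∉ {0, -1, …, -n}). -/
theorem stmt6 (s D n : ℕ) (hs : Odd s) (hD : 0 < D) (hn : 0 < n) (hsD : 3 * D ≤ s)
    (hDn : Even (D * n)) (t : ℝ)
    (h1 : ∀ k : ℕ, k ≤ n → t ≠ -(k : ℝ))
    (h2 : ∀ k : ℕ, k ≤ n → -(n : ℝ) - t ≠ -(k : ℝ)) :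
    R s D n (-(n : ℝ) - t) = - R s D n t := by
  have hD' : (D : ℝ) ≠ 0 := Nat.cast_ne_zero.mpr hD.ne'
  -- numerator
  have hnum : (∏ j ∈ Finset.range (3 * D * n + 1), ((-(n : ℝ) - t) - n + (j : ℝ) / D))
      = (-1 : ℝ) ^ (3 * D * n + 1) *
        ∏ j ∈ Finset.range (3 * D * n + 1), (t - n + (j : ℝ) / D) := by
    rw [← Finset.prod_range_reflect (fun j => t - (n : ℝ) + (j : ℝ) / D) (3 * D * n + 1)]
    have step : ∀ j ∈ Finset.range (3 * D * n + 1),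
        ((-(n : ℝ) - t) - n + (j : ℝ) / D)
          = (-1 : ℝ) * (t - (n : ℝ) + ((3 * D * n + 1 - 1 - j : ℕ) : ℝ) / D) := by
      intro j hj
      have hj' : j ≤ 3 * D * n := Nat.lt_succ_iff.mp (Finset.mem_range.mp hj)
      have h3 : ((3 * D * n + 1 - 1 - j : ℕ) : ℝ) = 3 * D * n - j := by
        rw [Nat.add_sub_cancel, Nat.cast_sub hj']
        push_cast; ring
      rw [h3]
      field_simp
      ring
    rw [Finset.prod_congr rfl step, Finset.prod_mul_distrib, Finset.prod_const,
      Finset.card_range]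
  -- denominator
  have hden : (∏ j ∈ Finset.range (n + 1), ((-(n : ℝ) - t) + j))
      = (-1 : ℝ) ^ (n + 1) * ∏ j ∈ Finset.range (n + 1), (t + j) := by
    rw [← Finset.prod_range_reflect (fun j => t + (j : ℝ)) (n + 1)]
    have step : ∀ j ∈ Finset.range (n + 1),
        ((-(n : ℝ) - t) + j) = (-1 : ℝ) * (t + ((n + 1 - 1 - j : ℕ) : ℝ)) := by
      intro j hj
      have hj' : j ≤ n := Nat.lt_succ_iff.mp (Finset.mem_range.mp hj)
      have h3 : ((n + 1 - 1 - j : ℕ) : ℝ) = n - j := by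
        rw [Nat.add_sub_cancel, Nat.cast_sub hj']
      rw [h3]; ring
    rw [Finset.prod_congr rfl step, Finset.prod_mul_distrib, Finset.prod_const,
      Finset.card_range]
  have hpar1 : (-1 : ℝ) ^ (3 * D * n + 1) = -1 := by
    have : Even (3 * D * n) := by
      have := hDn.mul_left 3
      simpa [mul_assoc] using this
    rw [pow_succ, this.neg_one_pow, one_mul]
  have hpar2 : ((-1 : ℝ) ^ (n + 1)) ^ (s + 1) = 1 := by
    rw [← pow_mul]
    exact Even.neg_one_pow ((hs.add_one).mul_left (n + 1))
  unfold R
  rw [hnum, hden, hpar1, mul_pow, hpar2, one_mul]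
  ring
end

section
/- Let s, D, n be positive integers with s odd, s ≥ 3D, and Dn even, and let a_{i,k} (1 ≤ i ≤ s, 0 ≤ k ≤ n) be rational numbers such that R_n(t) = Σ_{i=1}^{s} Σ_{k=0}^{n} a_{i,k}/(t+k)^i for every real t ∉ {0, -1, …, -n}. Then a_{i,n-k} = (-1)^{i+1} a_{i,k} for all 1 ≤ i ≤ s and 0 ≤ k ≤ n; in particular, for every even i with 2 ≤ i ≤ s one has Σ_{k=0}^{n} a_{i,k} = 0. -/
open Filter Topology Finset
open Filter Topology Finset

lemma pf_unique (s n : ℕ) (b : ℕ → ℕ → ℝ)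
    (h : ∀ t : ℝ, (∀ k : ℕ, k ≤ n → t ≠ -(k : ℝ)) →
      ∑ i ∈ Finset.Icc 1 s, ∑ k ∈ Finset.range (n + 1), b i k / (t + k) ^ i = 0) :
    ∀ i : ℕ, 1 ≤ i → i ≤ s → ∀ k : ℕ, k ≤ n → b i k = 0 := by
  set S : Set ℝ := {t : ℝ | ∀ k : ℕ, k ≤ n → t ≠ -(k : ℝ)} with hS
  -- complement of S is finite
  have hfin : Set.Finite Sᶜ := by
    apply Set.Finite.subset ((Set.finite_Iic n).image (fun k : ℕ => -(k : ℝ)))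
    intro t ht
    simp only [hS, Set.mem_compl_iff, Set.mem_setOf_eq, not_forall] at ht
    obtain ⟨k, hk, ht⟩ := ht
    push_neg at ht
    exact ⟨k, hk, ht.symm⟩
  have hdense : Dense S := by
    have := hfin.countable.dense_compl ℝ
    rwa [compl_compl] at this
  intro i hi1 his k0 hk0
  -- downward induction on i via d = s - i
  suffices key : ∀ d : ℕ, ∀ i : ℕ, 1 ≤ i → i ≤ s → s - i = d → b i k0 = 0 by
    exact key (s - i) i hi1 his rfl
  intro d
  induction d using Nat.strong_induction_on with
  | _ d ih =>
    intro i hi1 his hd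
    have hzero : ∀ j : ℕ, i < j → j ≤ s → b j k0 = 0 := fun j hij hjs =>
      ih (s - j) (by omega) j (by omega) hjs rfl
    haveI hNB : (𝓝[S] (-(k0 : ℝ))).NeBot := by
      rw [← mem_closure_iff_nhdsWithin_neBot, hdense.closure_eq]
      trivial
    have hmemS : ∀ t ∈ S, t + (k0 : ℝ) ≠ 0 := by
      intro t ht
      have := ht k0 hk0
      intro h0
      exact this (by linarith)
    -- the auxiliary function
    set G : ℝ → ℝ := fun t => ∑ j ∈ Finset.Icc 1 s, ∑ k ∈ Finset.range (n + 1),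
      b j k * ((t + k0) ^ i / (t + k) ^ j) with hG
    -- G vanishes on S
    have hG0 : ∀ t ∈ S, G t = 0 := by
      intro t ht
      have := h t ht
      calc G t = (t + (k0:ℝ)) ^ i * ∑ j ∈ Finset.Icc 1 s, ∑ k ∈ Finset.range (n + 1),
          b j k / (t + k) ^ j := by
            rw [Finset.mul_sum]
            refine Finset.sum_congr rfl fun j _ => ?_
            rw [Finset.mul_sum]
            refine Finset.sum_congr rfl fun k _ => ?_
            ring
        _ = 0 := by rw [this, mul_zero]
    -- limits of individual terms
    have hterm : ∀ j ∈ Finset.Icc 1 s, ∀ k ∈ Finset.range (n + 1),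
        Tendsto (fun t : ℝ => b j k * ((t + k0) ^ i / (t + k) ^ j)) (𝓝[S] (-(k0:ℝ)))
          (𝓝 (if j = i ∧ k = k0 then b i k0 else 0)) := by
      intro j hj k hk
      simp only [Finset.mem_Icc] at hj
      by_cases hkk : k = k0
      · subst hkk
        rcases lt_trichotomy j i with hji | hji | hji
        · -- j < i : term = b * (t+k)^(i-j) eventually
          have heq : ∀ t ∈ S, b j k * ((t + k) ^ i / (t + k) ^ j)
              = b j k * (t + k) ^ (i - j) := by
            intro t ht
            rw [pow_sub₀ _ (hmemS t ht) (le_of_lt hji), div_eq_mul_inv]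
          have hlim : Tendsto (fun t : ℝ => b j k * (t + k) ^ (i - j)) (𝓝[S] (-(k:ℝ)))
              (𝓝 (b j k * (-(k:ℝ) + k) ^ (i - j))) := by
            apply Tendsto.mono_left _ nhdsWithin_le_nhds
            exact (ContinuousAt.mul continuousAt_const
              (((continuousAt_id.add continuousAt_const)).pow _)).tendsto
          have : (b j k * (-(k:ℝ) + k) ^ (i - j)) = 0 := by
            rw [neg_add_cancel, zero_pow (by omega), mul_zero]
          rw [this] at hlim
          have : (if j = i ∧ k = k then b i k else 0) = 0 := by
            simp [hji.ne]
          rw [this]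
          exact Tendsto.congr' (eventually_nhdsWithin_of_forall
            (fun t ht => (heq t ht).symm)) hlim
        · -- j = i
          subst hji
          have heq : ∀ t ∈ S, b j k * ((t + k) ^ j / (t + k) ^ j) = b j k := by
            intro t ht
            rw [div_self (pow_ne_zero _ (hmemS t ht)), mul_one]
          simp only [and_self, if_true, eq_self_iff_true]
          exact Tendsto.congr' (eventually_nhdsWithin_of_forall
            (fun t ht => (heq t ht).symm)) tendsto_const_nhds
        · -- j > i : coefficient is zero
          have hb : b j k = 0 := hzero j hji hj.2
          have : (if j = i ∧ k = k then b i k else 0) = 0 := by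
            simp [hji.ne']
          rw [this]
          have : (fun t : ℝ => b j k * ((t + k) ^ i / (t + k) ^ j)) = fun _ => 0 := by
            funext t; rw [hb, zero_mul]
          rw [this]
          exact tendsto_const_nhds
      · -- k ≠ k0 : continuous at -k0 with value 0
        have hne : (-(k0:ℝ) + (k:ℝ)) ≠ 0 := by
          intro h0
          apply hkk
          have : (k : ℝ) = (k0 : ℝ) := by linarith
          exact_mod_cast this
        have hcont : ContinuousAt (fun t : ℝ => b j k * ((t + k0) ^ i / (t + k) ^ j))
            (-(k0:ℝ)) := by
          apply ContinuousAt.mul continuousAt_const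
          exact ContinuousAt.div ((continuousAt_id.add continuousAt_const).pow _)
            ((continuousAt_id.add continuousAt_const).pow _) (pow_ne_zero _ hne)
        have hval : b j k * ((-(k0:ℝ) + k0) ^ i / (-(k0:ℝ) + k) ^ j) = 0 := by
          rw [neg_add_cancel, zero_pow (by omega), zero_div, mul_zero]
        have : (if j = i ∧ k = k0 then b i k0 else 0) = 0 := by simp [hkk]
        rw [this, ← hval]
        exact hcont.tendsto.mono_left nhdsWithin_le_nhds
    -- sum of limits
    have hsum : Tendsto G (𝓝[S] (-(k0:ℝ)))
        (𝓝 (∑ j ∈ Finset.Icc 1 s, ∑ k ∈ Finset.range (n + 1),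
          if j = i ∧ k = k0 then b i k0 else 0)) := by
      apply tendsto_finset_sum
      intro j hj
      exact tendsto_finset_sum _ (hterm j hj)
    have hsumval : (∑ j ∈ Finset.Icc 1 s, ∑ k ∈ Finset.range (n + 1),
        if j = i ∧ k = k0 then b i k0 else 0) = b i k0 := by
      rw [Finset.sum_eq_single i]
      · rw [Finset.sum_eq_single k0]
        · simp
        · intro k _ hk; simp [hk]
        · intro hk; exact absurd (Finset.mem_range.mpr (by omega)) hk
      · intro j _ hj
        apply Finset.sum_eq_zero
        intro k _
        simp [hj]
      · intro hi
        exact absurd (Finset.mem_Icc.mpr ⟨hi1, his⟩) hi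
    rw [hsumval] at hsum
    have hzeroT : Tendsto G (𝓝[S] (-(k0:ℝ))) (𝓝 0) := by
      apply Tendsto.congr' (eventually_nhdsWithin_of_forall
        (fun t ht => (hG0 t ht).symm)) tendsto_const_nhds
    exact tendsto_nhds_unique hsum hzeroT





lemma R_reflect (s D n : ℕ) (hs : Odd s) (hD : 0 < D) (hDn : Even (D * n)) (t : ℝ) :
    R s D n (-(n : ℝ) - t) = - R s D n t := by
  have hD' : (D : ℝ) ≠ 0 := Nat.cast_ne_zero.mpr hD.ne'
  have hnum : (∏ j ∈ Finset.range (3 * D * n + 1), ((-(n:ℝ) - t) - n + (j : ℝ) / D))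
      = -(∏ j ∈ Finset.range (3 * D * n + 1), (t - n + (j : ℝ) / D)) := by
    rw [← Finset.prod_range_reflect (fun j => ((-(n:ℝ) - t) - n + (j : ℝ) / D)) (3*D*n+1)]
    have : ∀ j ∈ Finset.range (3 * D * n + 1),
        ((-(n:ℝ) - t) - n + ((3*D*n + 1 - 1 - j : ℕ) : ℝ) / D)
        = -1 * (t - n + (j : ℝ) / D) := by
      intro j hj
      rw [Finset.mem_range] at hj
      have hj' : j ≤ 3*D*n := by omega
      have : ((3*D*n + 1 - 1 - j : ℕ) : ℝ) = 3*D*n - j := by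
        push_cast [Nat.add_sub_cancel]
        rw [Nat.cast_sub hj']
        push_cast; ring
      rw [this]
      field_simp
      ring
    rw [Finset.prod_congr rfl this, Finset.prod_mul_distrib, Finset.prod_const,
      Finset.card_range]
    have heven : Even (3 * D * n) := by
      rw [mul_assoc]
      exact hDn.mul_left 3
    rw [(heven.add_one).neg_one_pow, neg_one_mul]
  have hden : (∏ j ∈ Finset.range (n + 1), ((-(n:ℝ) - t) + j)) ^ (s+1)
      = (∏ j ∈ Finset.range (n + 1), (t + j)) ^ (s+1) := by
    rw [← Finset.prod_range_reflect (fun j => ((-(n:ℝ) - t) + (j : ℝ))) (n+1)]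
    have : ∀ j ∈ Finset.range (n + 1),
        ((-(n:ℝ) - t) + ((n + 1 - 1 - j : ℕ) : ℝ)) = -1 * (t + (j : ℝ)) := by
      intro j hj
      rw [Finset.mem_range] at hj
      have : ((n + 1 - 1 - j : ℕ) : ℝ) = n - j := by
        push_cast [Nat.add_sub_cancel]
        rw [Nat.cast_sub (by omega)]
      rw [this]; ring
    rw [Finset.prod_congr rfl this, Finset.prod_mul_distrib, Finset.prod_const,
      Finset.card_range, mul_pow, ← pow_mul]
    have : Even ((n+1) * (s+1)) := (hs.add_one).mul_left (n+1)
    rw [this.neg_one_pow, one_mul]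
  unfold R
  rw [hnum, hden, mul_neg, neg_div]

theorem stmt7 (s D n : ℕ) (hs : Odd s) (hD : 0 < D) (hn : 0 < n) (hsD : 3 * D ≤ s)
    (hDn : Even (D * n)) (a : ℕ → ℕ → ℚ)
    (ha : ∀ t : ℝ, (∀ k : ℕ, k ≤ n → t ≠ -(k : ℝ)) →
      R s D n t = ∑ i ∈ Finset.Icc 1 s, ∑ k ∈ Finset.range (n + 1), (a i k : ℝ) / (t + k) ^ i) :
    (∀ i : ℕ, 1 ≤ i → i ≤ s → ∀ k : ℕ, k ≤ n → a i (n - k) = (-1) ^ (i + 1) * a i k) ∧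
    (∀ i : ℕ, 2 ≤ i → i ≤ s → Even i → ∑ k ∈ Finset.range (n + 1), a i k = 0) := by
  have key : ∀ i : ℕ, 1 ≤ i → i ≤ s → ∀ k : ℕ, k ≤ n →
      ((-1:ℝ)^i * (a i (n-k) : ℝ) + (a i k : ℝ)) = 0 := by
    apply pf_unique s n (fun i k => (-1:ℝ)^i * (a i (n-k) : ℝ) + (a i k : ℝ))
    intro t ht
    have ht' : ∀ k : ℕ, k ≤ n → (-(n:ℝ) - t) ≠ -(k:ℝ) := by
      intro k hk h0
      apply ht (n - k) (Nat.sub_le n k)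
      rw [Nat.cast_sub hk]
      linarith
    have h1 := ha (-(n:ℝ) - t) ht'
    rw [R_reflect s D n hs hD hDn t, ha t ht] at h1
    have h2 : ∀ i ∈ Finset.Icc 1 s,
        ∑ k ∈ Finset.range (n+1), (a i k : ℝ) / ((-(n:ℝ) - t) + k) ^ i
        = ∑ k ∈ Finset.range (n+1), (-1:ℝ)^i * (a i (n-k) : ℝ) / (t + k) ^ i := by
      intro i hi
      rw [← Finset.sum_range_reflect
        (fun k => (-1:ℝ)^i * (a i (n-k) : ℝ) / (t + (k:ℝ)) ^ i) (n+1)]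
      apply Finset.sum_congr rfl
      intro k hk
      rw [Finset.mem_range] at hk
      have hkn : k ≤ n := by omega
      have e0 : n + 1 - 1 - k = n - k := by omega
      have e1 : n - (n - k) = k := Nat.sub_sub_self hkn
      rw [e0, e1]
      have e2 : ((-(n:ℝ) - t) + (k:ℝ)) = -(t + ((n-k:ℕ):ℝ)) := by
        rw [Nat.cast_sub hkn]; ring
      have hX : (t + ((n-k:ℕ):ℝ)) ≠ 0 := by
        intro h0
        exact ht (n-k) (Nat.sub_le n k) (by linarith)
      rw [e2, neg_pow]
      rcases Nat.even_or_odd i with he | ho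
      · rw [he.neg_one_pow, one_mul, one_mul]
      · rw [ho.neg_one_pow, neg_one_mul, neg_one_mul, div_neg, neg_div]
    rw [Finset.sum_congr rfl h2] at h1
    have expand : ∀ i ∈ Finset.Icc 1 s, ∀ k ∈ Finset.range (n+1),
        ((-1:ℝ)^i * (a i (n-k) : ℝ) + (a i k : ℝ)) / (t + k) ^ i
        = (-1:ℝ)^i * (a i (n-k) : ℝ) / (t + k) ^ i + (a i k : ℝ) / (t + k) ^ i := by
      intro i _ k _
      rw [add_div]
    calc ∑ i ∈ Finset.Icc 1 s, ∑ k ∈ Finset.range (n + 1),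
          ((-1:ℝ)^i * (a i (n-k) : ℝ) + (a i k : ℝ)) / (t + k) ^ i
        = ∑ i ∈ Finset.Icc 1 s, ∑ k ∈ Finset.range (n + 1),
            ((-1:ℝ)^i * (a i (n-k) : ℝ) / (t + k) ^ i + (a i k : ℝ) / (t + k) ^ i) := by
          refine Finset.sum_congr rfl fun i hi => Finset.sum_congr rfl fun k hk => ?_
          exact expand i hi k hk
      _ = (∑ i ∈ Finset.Icc 1 s, ∑ k ∈ Finset.range (n + 1),
            (-1:ℝ)^i * (a i (n-k) : ℝ) / (t + k) ^ i)
          + ∑ i ∈ Finset.Icc 1 s, ∑ k ∈ Finset.range (n + 1),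
            (a i k : ℝ) / (t + k) ^ i := by
          rw [← Finset.sum_add_distrib]
          refine Finset.sum_congr rfl fun i _ => ?_
          rw [← Finset.sum_add_distrib]
      _ = 0 := by rw [← h1]; ring
  have part1 : ∀ i : ℕ, 1 ≤ i → i ≤ s → ∀ k : ℕ, k ≤ n →
      a i (n - k) = (-1) ^ (i + 1) * a i k := by
    intro i hi1 his k hk
    have hk' := key i hi1 his k hk
    have : ((a i (n-k) : ℝ)) = (((-1:ℚ)^(i+1) * a i k : ℚ) : ℝ) := by
      push_cast
      rcases Nat.even_or_odd i with he | ho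
      · rw [he.neg_one_pow, one_mul] at hk'
        rw [(he.add_one).neg_one_pow]
        linarith
      · rw [ho.neg_one_pow, neg_one_mul] at hk'
        rw [(ho.add_one).neg_one_pow, one_mul]
        linarith
    exact_mod_cast this
  refine ⟨part1, ?_⟩
  intro i hi2 his hie
  have hrefl : ∑ k ∈ Finset.range (n+1), a i k
      = ∑ k ∈ Finset.range (n+1), a i (n-k) := by
    rw [← Finset.sum_range_reflect (fun k => a i k) (n+1)]
    refine Finset.sum_congr rfl fun k hk => ?_
    congr 1
  have hneg : ∑ k ∈ Finset.range (n+1), a i (n-k)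
      = -∑ k ∈ Finset.range (n+1), a i k := by
    rw [← Finset.sum_neg_distrib]
    refine Finset.sum_congr rfl fun k hk => ?_
    rw [Finset.mem_range] at hk
    rw [part1 i (by omega) his k (by omega), (hie.add_one).neg_one_pow]
    ring
  have := hrefl.trans hneg
  linarith
end

section
/- Let s and D be positive integers with s odd and s + 1 > 3D. Then there exists exactly one positive real number x_0 such that (x_0+3)^D (x_0+1)^{s+1} = x_0^D (x_0+2)^{s+1}; equivalently, the function f(x) = ((x+3)/x)^D · ((x+1)/(x+2))^{s+1} takes the value 1 at exactly one positive real x. Moreover, f is strictly decreasing on (0, x_1] and strictly increasing on [x_1, ∞) for a unique positive real x_1, with lim_{x→0⁺} f(x) = +∞ and lim_{x→+∞} f(x) = 1. -/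
/-- The auxiliary function `f(x) = ((x+3)/x)^D ((x+1)/(x+2))^{s+1}`. -/
noncomputable def fAux (s D : ℕ) (x : ℝ) : ℝ :=
  ((x + 3) / x) ^ D * ((x + 1) / (x + 2)) ^ (s + 1)

/-!
On `(0, ∞)` the logarithmic derivative of `f` is
`((s + 1 - 3D)(x² + 3x) - 6D) / (x (x + 1) (x + 2) (x + 3))`. Since `s + 1 > 3D`, the numerator
is an increasing quadratic with a single positive root `x₁`, so `f` decreases on `(0, x₁]` and
increases on `[x₁, ∞)`. As `f → ∞` at `0⁺` and `f → 1` at `∞`, `f < 1` on `[x₁, ∞)` and `f`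
takes the value `1` exactly once, inside `(0, x₁)`.
-/

open Real Set Filter Topology

theorem eq_of_strictAntiOn_Ioc_of_strictMonoOn_Ici {α β : Type*} [LinearOrder α] [Preorder β]
    {f : α → β} {a x y : α} (hx : a < x) (hy : a < y)
    (hfx : StrictAntiOn f (Ioc a x)) (hfx' : StrictMonoOn f (Ici x))
    (hfy : StrictAntiOn f (Ioc a y)) (hfy' : StrictMonoOn f (Ici y)) : x = y := by
  rcases lt_trichotomy x y with h | h | h
  · exact absurd (hfx' le_rfl h.le h) (hfy ⟨hx, h.le⟩ ⟨hy, le_rfl⟩ h).asymm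
  · exact h
  · exact absurd (hfy' le_rfl h.le h) (hfx ⟨hy, h.le⟩ ⟨hx, le_rfl⟩ h).asymm

theorem StrictMonoOn.lt_of_tendsto_atTop {α β : Type*} [LinearOrder α] [NoMaxOrder α]
    [TopologicalSpace β] [Preorder β] [OrderClosedTopology β] {f : α → β} {b y : α} {c : β}
    (hf : StrictMonoOn f (Ici b)) (hlim : Tendsto f atTop (𝓝 c)) (hy : b ≤ y) : f y < c := by
  obtain ⟨z, hyz⟩ := exists_gt y
  have : Nonempty α := ⟨y⟩
  refine (hf hy (hy.trans hyz.le) hyz).trans_le (ge_of_tendsto hlim ?_)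
  filter_upwards [eventually_ge_atTop z] with w hzw
  exact hf.monotoneOn (hy.trans hyz.le) (hy.trans (hyz.le.trans hzw)) hzw

theorem existsUnique_eq_of_strictAntiOn_of_strictMonoOn {f : ℝ → ℝ} {a b c : ℝ} (hab : a < b)
    (hf : ContinuousOn f (Ioi a)) (hanti : StrictAntiOn f (Ioc a b))
    (hmono : StrictMonoOn f (Ici b)) (hleft : Tendsto f (𝓝[>] a) atTop)
    (hright : Tendsto f atTop (𝓝 c)) : ∃! x, a < x ∧ f x = c := by
  have hlt : ∀ y, b ≤ y → f y < c := fun y hy => hmono.lt_of_tendsto_atTop hright hy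
  obtain ⟨ε, hcε, hεa, hεb⟩ : ∃ ε, c < f ε ∧ a < ε ∧ ε < b :=
    ((hleft.eventually_gt_atTop c).and (Ioo_mem_nhdsGT hab)).exists
  obtain ⟨x, hx, hfx⟩ := intermediate_value_Ioo' hεb.le
    (hf.mono fun y hy => hεa.trans_le hy.1) ⟨hlt b le_rfl, hcε⟩
  have hsol : ∀ y, a < y → f y = c → y ∈ Ioc a b := fun y hy hfy =>
    ⟨hy, not_lt.1 fun hby => (hlt y hby.le).ne hfy⟩
  refine ⟨x, ⟨hεa.trans hx.1, hfx⟩, fun y ⟨hy, hfy⟩ => ?_⟩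
  exact hanti.injOn (hsol y hy hfy) (hsol x (hεa.trans hx.1) hfx) (hfy.trans hfx.symm)

noncomputable def logFAux (s D : ℕ) (x : ℝ) : ℝ :=
  D * (log (x + 3) - log x) + (s + 1) * (log (x + 1) - log (x + 2))

theorem eqOn_exp_logFAux (s D : ℕ) : EqOn (exp ∘ logFAux s D) (fAux s D) (Ioi 0) := by
  intro x (hx : 0 < x)
  have hcast : ((s : ℝ) + 1) = ((s + 1 : ℕ) : ℝ) := by push_cast; ring
  rw [Function.comp_apply, logFAux, hcast, exp_add, exp_nat_mul, exp_nat_mul, exp_sub, exp_sub,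
    exp_log (by positivity), exp_log hx, exp_log (by positivity), exp_log (by positivity), fAux]

/-- The positive root of `(s + 1 - 3D)(x² + 3x) = 6D`. -/
noncomputable def turningPoint (s D : ℕ) : ℝ :=
  (√(9 + 24 * D / ((s : ℝ) + 1 - 3 * D)) - 3) / 2

section

variable {s D : ℕ}

theorem cast_add_one_sub_three_mul_pos (hsD : 3 * D < s + 1) : 0 < (s : ℝ) + 1 - 3 * D := by
  have : (3 * D : ℝ) < s + 1 := by exact_mod_cast hsD
  linarith

theorem turningPoint_pos (hD : 0 < D) (hsD : 3 * D < s + 1) : 0 < turningPoint s D := by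
  have : 3 < √(9 + 24 * D / ((s : ℝ) + 1 - 3 * D)) := by
    rw [lt_sqrt (by norm_num)]
    have ha := cast_add_one_sub_three_mul_pos hsD
    have hD' : (0 : ℝ) < D := by exact_mod_cast hD
    have : 0 < 24 * D / ((s : ℝ) + 1 - 3 * D) := by positivity
    linarith
  unfold turningPoint
  linarith

theorem turningPoint_isRoot (hsD : 3 * D < s + 1) :
    ((s : ℝ) + 1 - 3 * D) * (turningPoint s D ^ 2 + 3 * turningPoint s D) = 6 * D := by
  have ha := cast_add_one_sub_three_mul_pos hsD
  have hsq := sq_sqrt (show 0 ≤ 9 + 24 * D / ((s : ℝ) + 1 - 3 * D) by positivity)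
  unfold turningPoint
  rw [show ∀ r : ℝ, ((r - 3) / 2) ^ 2 + 3 * ((r - 3) / 2) = (r ^ 2 - 9) / 4 from
    fun r => by ring, hsq]
  field_simp
  ring

theorem hasDerivAt_logFAux (hsD : 3 * D < s + 1) {x : ℝ} (hx : 0 < x) :
    HasDerivAt (logFAux s D)
      (((s : ℝ) + 1 - 3 * D) * (x - turningPoint s D) * (x + turningPoint s D + 3)
        / (x * (x + 3) * (x + 1) * (x + 2))) x := by
  have hlog : ∀ c : ℝ, 0 < x + c → HasDerivAt (fun y => log (y + c)) (x + c)⁻¹ x := fun c hc => by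
    simpa using ((hasDerivAt_id x).add_const c).log hc.ne'
  have hraw := (((hlog 3 (by linarith)).sub (hasDerivAt_log hx.ne')).const_mul (D : ℝ)).add
    (((hlog 1 (by linarith)).sub (hlog 2 (by linarith))).const_mul ((s : ℝ) + 1))
  refine hraw.congr_deriv ?_
  have hx3 : x + 3 ≠ 0 := by positivity
  have hx1 : x + 1 ≠ 0 := by positivity
  have hx2 : x + 2 ≠ 0 := by positivity
  have hnum : ((s : ℝ) + 1 - 3 * D) * (x - turningPoint s D) * (x + turningPoint s D + 3)
      = ((s : ℝ) + 1 - 3 * D) * (x ^ 2 + 3 * x) - 6 * D := by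
    linear_combination -turningPoint_isRoot hsD
  rw [hnum]
  field_simp
  ring

theorem strictAntiOn_fAux (hD : 0 < D) (hsD : 3 * D < s + 1) :
    StrictAntiOn (fAux s D) (Ioc 0 (turningPoint s D)) := by
  refine (exp_strictMono.comp_strictAntiOn ?_).congr ((eqOn_exp_logFAux s D).mono fun x hx => hx.1)
  have ht := turningPoint_pos hD hsD
  refine strictAntiOn_of_hasDerivWithinAt_neg (convex_Ioc 0 _)
    (fun x hx => (hasDerivAt_logFAux hsD hx.1).continuousAt.continuousWithinAt)
    (fun x hx => (hasDerivAt_logFAux hsD (interior_subset hx).1).hasDerivWithinAt) fun x hx => ?_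
  rw [interior_Ioc] at hx
  have ha := cast_add_one_sub_three_mul_pos hsD
  have hx0 := hx.1
  exact div_neg_of_neg_of_pos
    (mul_neg_of_neg_of_pos (mul_neg_of_pos_of_neg ha (by linarith [hx.2])) (by linarith))
    (by positivity)

theorem strictMonoOn_fAux (hD : 0 < D) (hsD : 3 * D < s + 1) :
    StrictMonoOn (fAux s D) (Ici (turningPoint s D)) := by
  have ht := turningPoint_pos hD hsD
  refine (exp_strictMono.comp_strictMonoOn ?_).congr
    ((eqOn_exp_logFAux s D).mono fun x (hx : _ ≤ x) => ht.trans_le hx)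
  refine strictMonoOn_of_hasDerivWithinAt_pos (convex_Ici _)
    (fun x hx => (hasDerivAt_logFAux hsD (ht.trans_le hx)).continuousAt.continuousWithinAt)
    (fun x hx => (hasDerivAt_logFAux hsD (ht.trans_le (interior_subset hx))).hasDerivWithinAt)
    fun x hx => ?_
  rw [interior_Ici, mem_Ioi] at hx
  have ha := cast_add_one_sub_three_mul_pos hsD
  have hx0 := ht.trans hx
  exact div_pos (mul_pos (mul_pos ha (by linarith)) (by linarith)) (by positivity)

end

theorem continuousOn_fAux (s D : ℕ) : ContinuousOn (fAux s D) (Ioi 0) := by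
  unfold fAux
  fun_prop (disch := intro x (hx : 0 < x); positivity)

theorem tendsto_add_div_add_atTop (a b : ℝ) :
    Tendsto (fun x => (x + a) / (x + b)) atTop (𝓝 1) := by
  have hinv : Tendsto (fun x => (x + b)⁻¹) atTop (𝓝 0) :=
    (tendsto_atTop_add_const_right _ b tendsto_id).inv_tendsto_atTop
  refine (by simpa using tendsto_const_nhds.add (hinv.const_mul (a - b)) :
    Tendsto (fun x => 1 + (a - b) * (x + b)⁻¹) atTop (𝓝 1)).congr' ?_
  filter_upwards [eventually_gt_atTop (-b)] with x hx
  have : x + b ≠ 0 := by linarith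
  field_simp
  ring

theorem tendsto_fAux_atTop (s D : ℕ) : Tendsto (fAux s D) atTop (𝓝 1) := by
  have hleft : Tendsto (fun x : ℝ => (x + 3) / x) atTop (𝓝 1) := by
    simpa using tendsto_add_div_add_atTop 3 0
  have h := (hleft.pow D).mul ((tendsto_add_div_add_atTop 1 2).pow (s + 1))
  rwa [one_pow, one_pow, mul_one] at h

theorem tendsto_fAux_nhdsGT_zero (s : ℕ) {D : ℕ} (hD : D ≠ 0) :
    Tendsto (fAux s D) (𝓝[>] 0) atTop := by
  have hleft : Tendsto (fun x : ℝ => (x + 3) / x) (𝓝[>] 0) atTop :=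
    Tendsto.pos_mul_atTop (by norm_num : (0 : ℝ) < 0 + 3)
      ((continuous_add_const 3).continuousWithinAt.tendsto) tendsto_inv_nhdsGT_zero
  have hright : ContinuousAt (fun x : ℝ => ((x + 1) / (x + 2)) ^ (s + 1)) 0 := by
    fun_prop (disch := norm_num)
  exact ((tendsto_pow_atTop hD).comp hleft).atTop_mul_pos (by norm_num)
    (hright.tendsto.mono_left nhdsWithin_le_nhds)

theorem fAux_eq_one_iff (s D : ℕ) {x : ℝ} (hx : 0 < x) :
    fAux s D x = 1 ↔ (x + 3) ^ D * (x + 1) ^ (s + 1) = x ^ D * (x + 2) ^ (s + 1) := by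
  rw [fAux, div_pow, div_pow, div_mul_div_comm, div_eq_one_iff_eq (by positivity)]

theorem stmt10_general (s D : ℕ) (hD : 0 < D) (hsD : 3 * D < s + 1) :
    (∃! x0 : ℝ, 0 < x0 ∧
        (x0 + 3) ^ D * (x0 + 1) ^ (s + 1) = x0 ^ D * (x0 + 2) ^ (s + 1)) ∧
    (∃! x0 : ℝ, 0 < x0 ∧ fAux s D x0 = 1) ∧
    (∃! x1 : ℝ, 0 < x1 ∧ StrictAntiOn (fAux s D) (Set.Ioc 0 x1) ∧
        StrictMonoOn (fAux s D) (Set.Ici x1)) ∧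
    Filter.Tendsto (fAux s D) (nhdsWithin 0 (Set.Ioi 0)) Filter.atTop ∧
    Filter.Tendsto (fAux s D) Filter.atTop (nhds 1) := by
  have ht := turningPoint_pos hD hsD
  have hanti := strictAntiOn_fAux hD hsD
  have hmono := strictMonoOn_fAux hD hsD
  have hleft := tendsto_fAux_nhdsGT_zero s hD.ne'
  have hright := tendsto_fAux_atTop s D
  have hroot := existsUnique_eq_of_strictAntiOn_of_strictMonoOn ht (continuousOn_fAux s D)
    hanti hmono hleft hright
  refine ⟨(existsUnique_congr fun x => and_congr_right fun hx => fAux_eq_one_iff s D hx).1 hroot,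
    hroot, ⟨_, ⟨ht, hanti, hmono⟩, fun y ⟨hy, hyanti, hymono⟩ => ?_⟩, hleft, hright⟩
  exact eq_of_strictAntiOn_Ioc_of_strictMonoOn_Ici hy ht hyanti hymono hanti hmono

theorem stmt10 (s D : ℕ) (hs : 0 < s) (hD : 0 < D) (hodd : Odd s) (hsD : 3 * D < s + 1) :
    (∃! x0 : ℝ, 0 < x0 ∧
        (x0 + 3) ^ D * (x0 + 1) ^ (s + 1) = x0 ^ D * (x0 + 2) ^ (s + 1)) ∧
    (∃! x0 : ℝ, 0 < x0 ∧ fAux s D x0 = 1) ∧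
    (∃! x1 : ℝ, 0 < x1 ∧ StrictAntiOn (fAux s D) (Set.Ioc 0 x1) ∧
        StrictMonoOn (fAux s D) (Set.Ici x1)) ∧
    Filter.Tendsto (fAux s D) (nhdsWithin 0 (Set.Ioi 0)) Filter.atTop ∧
    Filter.Tendsto (fAux s D) Filter.atTop (nhds 1) :=
  stmt10_general s D hD hsD
end

section
/- There exists a constant C > 0 with the following property. Let s and D be positive integers with s odd, s ≥ 3D, and s/(D·log D) ≥ C. Let x_0 be the unique positive real root of (X+3)^D (X+1)^{s+1} - X^D (X+2)^{s+1}, and let g(x) = D^{3D} · (x+3)^{3D} (x+1)^{s+1} / (x+2)^{2(s+1)}. Then g(x_0) < 3^{-(s+1)}. -/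
/-!
Taking logarithms in the defining equation of `x₀` and using `1 - 1/t ≤ log t ≤ t - 1` gives
`(s + 1) x₀ ≤ 3D (x₀ + 2)`, so `x₀ ≤ 1` once `s` is large compared with `D`. Since
`4 (x + 1) ≤ (x + 2)²`, it follows that `3^(s+1) g(x₀) ≤ (4D)^(3D) (3/4)^(s+1)`, and this is `< 1`
as soon as `s + 1 > 36 D log D`, because `log (4D) ≤ 3 log D` and `log (4/3) ≥ 1/4`.
-/

open Real

lemma two_le_of_le_div_mul_log {C s : ℝ} {D : ℕ} (hC : 0 < C) (h : C ≤ s / (D * log D)) :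
    2 ≤ D := by
  by_contra! hD
  interval_cases D <;> simp at h <;> linarith

lemma mul_le_of_pow_mul_pow_eq {x : ℝ} (hx : 0 < x) {D n : ℕ}
    (h : (x + 3) ^ D * (x + 1) ^ n = x ^ D * (x + 2) ^ n) :
    n * x ≤ 3 * D * (x + 2) := by
  have hlog : n * log ((x + 2) / (x + 1)) = D * log ((x + 3) / x) := by
    have hpow : ((x + 2) / (x + 1)) ^ n = ((x + 3) / x) ^ D := by
      rw [div_pow, div_pow, div_eq_div_iff (by positivity) (by positivity)]
      linarith
    simpa only [log_pow] using congrArg log hpow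
  have hlower : 1 / (x + 2) ≤ log ((x + 2) / (x + 1)) := by
    have := one_sub_inv_le_log_of_pos (x := (x + 2) / (x + 1)) (by positivity)
    rwa [inv_div, one_sub_div (by positivity), add_sub_add_left_eq_sub,
      show (2 : ℝ) - 1 = 1 by norm_num] at this
  have hupper : log ((x + 3) / x) ≤ 3 / x := by
    have := log_le_sub_one_of_pos (x := (x + 3) / x) (by positivity)
    rwa [div_sub_one hx.ne', add_sub_cancel_left] at this
  have : n / (x + 2) ≤ 3 * D / x :=
    calc (n : ℝ) / (x + 2) = n * (1 / (x + 2)) := by ring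
      _ ≤ n * log ((x + 2) / (x + 1)) := by gcongr
      _ = D * log ((x + 3) / x) := hlog
      _ ≤ D * (3 / x) := by gcongr
      _ = 3 * D / x := by ring
  rw [div_le_div_iff₀ (by positivity) hx] at this
  linarith

lemma le_one_of_pow_mul_pow_eq {x : ℝ} (hx : 0 < x) {D n : ℕ} (hD : 0 < D) (hn : 9 * D ≤ n)
    (h : (x + 3) ^ D * (x + 1) ^ n = x ^ D * (x + 2) ^ n) :
    x ≤ 1 := by
  have hmul := mul_le_of_pow_mul_pow_eq hx h
  have hD' : (0 : ℝ) < D := by exact_mod_cast hD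
  have hn' : 9 * (D : ℝ) * x ≤ n * x := by gcongr; exact_mod_cast hn
  nlinarith

lemma four_mul_pow_lt_four_div_three_pow {D n : ℕ} (hD : 2 ≤ D) (h : 36 * (D * log D) < n) :
    (4 * D : ℝ) ^ (3 * D) < (4 / 3) ^ n := by
  have hD' : (2 : ℝ) ≤ D := by exact_mod_cast hD
  rw [← log_lt_log_iff (by positivity) (by positivity), log_pow, log_pow]
  have hlog4 : log (4 * D) ≤ 3 * log D := by
    have : log 4 = 2 * log 2 := by
      rw [show (4 : ℝ) = 2 ^ 2 by norm_num, log_pow]; norm_num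
    have := log_le_log (by norm_num) hD'
    rw [log_mul (by norm_num) (by positivity)]
    linarith
  have hlog43 : 1 / 4 ≤ log (4 / 3 : ℝ) := by
    have := one_sub_inv_le_log_of_pos (x := (4 / 3 : ℝ)) (by norm_num)
    norm_num at this ⊢
    linarith
  calc ((3 * D : ℕ) : ℝ) * log (4 * D) ≤ 3 * D * (3 * log D) := by push_cast; gcongr
    _ = 9 * (D * log D) := by ring
    _ < n * (1 / 4) := by linarith
    _ ≤ n * log (4 / 3) := by gcongr

lemma pow_mul_pow_div_pow_lt_three_zpow {x : ℝ} (hx : 0 < x) (hx1 : x ≤ 1) {D s : ℕ}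
    (h : (4 * D : ℝ) ^ (3 * D) < (4 / 3) ^ (s + 1)) :
    (D : ℝ) ^ (3 * D) * (x + 3) ^ (3 * D) * (x + 1) ^ (s + 1) / (x + 2) ^ (2 * (s + 1)) <
      (3 : ℝ) ^ (-((s : ℤ) + 1)) := by
  have hquad : 3 * (x + 1) / (x + 2) ^ 2 ≤ 3 / 4 := by
    rw [div_le_div_iff₀ (by positivity) (by norm_num)]
    nlinarith [sq_nonneg x]
  calc (D : ℝ) ^ (3 * D) * (x + 3) ^ (3 * D) * (x + 1) ^ (s + 1) / (x + 2) ^ (2 * (s + 1))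
      = ((x + 3) * D) ^ (3 * D) * (3 * (x + 1) / (x + 2) ^ 2) ^ (s + 1) / 3 ^ (s + 1) := by
        rw [mul_pow, div_pow, mul_pow, ← pow_mul]; field_simp
    _ ≤ (4 * D) ^ (3 * D) * (3 / 4) ^ (s + 1) / 3 ^ (s + 1) := by
        gcongr
        linarith
    _ < (4 / 3) ^ (s + 1) * (3 / 4) ^ (s + 1) / 3 ^ (s + 1) := by gcongr
    _ = (3 : ℝ) ^ (-((s : ℤ) + 1)) := by
        rw [← mul_pow, zpow_neg, ← Nat.cast_succ, zpow_natCast]; norm_num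

theorem stmt13 :
    ∃ C : ℝ, 0 < C ∧ ∀ s D : ℕ, 0 < s → 0 < D → Odd s → 3 * D ≤ s →
      C ≤ (s : ℝ) / (D * Real.log D) →
      ∀ x0 : ℝ, 0 < x0 →
        (x0 + 3) ^ D * (x0 + 1) ^ (s + 1) = x0 ^ D * (x0 + 2) ^ (s + 1) →
        (D : ℝ) ^ (3 * D) * (x0 + 3) ^ (3 * D) * (x0 + 1) ^ (s + 1) /
            (x0 + 2) ^ (2 * (s + 1)) < (3 : ℝ) ^ (-((s : ℤ) + 1)) := by
  refine ⟨36, by norm_num, ?_⟩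
  intro s D _ hD0 _ _ hC x0 hx0 hroot
  have hD : 2 ≤ D := two_le_of_le_div_mul_log (by norm_num) hC
  have hlogD : 0.69 < log D :=
    calc (0.69 : ℝ) < log 2 := by linarith [log_two_gt_d9]
      _ ≤ log D := log_le_log (by norm_num) (by exact_mod_cast hD)
  have hs : 36 * (D * log D) < (s + 1 : ℕ) := by
    rw [le_div_iff₀ (by positivity)] at hC
    push_cast
    linarith
  have h9 : 9 * D ≤ s + 1 := by
    have : 9 * (D : ℝ) < s + 1 := by push_cast at hs; nlinarith
    exact_mod_cast this.le
  exact pow_mul_pow_div_pow_lt_three_zpow hx0 (le_one_of_pow_mul_pow_eq hx0 hD0 h9 hroot)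
    (four_mul_pow_lt_four_div_three_pow hD hs)
end

section
/- There exists a constant C > 0 with the following property. Let s and D be positive integers with s odd, s ≥ 3D, and s/(D·log D) ≥ C. Let x_0 be the unique positive real root of (X+3)^D (X+1)^{s+1} - X^D (X+2)^{s+1}. Then x_0 < 4·2^{-(s+1)/D}; in particular x_0 < 1/2. -/
/-!
Taking logarithms, the root equation reads `log (1 + 3/x) = r * log (1 + 1/(x+1))` with
`r = (s+1)/D ≥ 200`, so it suffices that the left side is strictly smaller for every
`x ≥ t = 4 * 2^(-r)`. For `x ≥ 1` the bounds `u/(1+u) ≤ log (1+u) ≤ u` give this directly.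
For `t ≤ x ≤ 1` they reduce it to the positivity of the concave function
`G y = r log 2 - log 3 + log y - (r/2 + 1/3) y`, which only has to be checked at `t` and at `1`;
at `t` it comes down to `16 r < 2^r`.
-/

open Real Set

namespace Real

theorem log_sub_log_le_sub_div {x y : ℝ} (hx : 0 < x) (hy : 0 < y) :
    log y - log x ≤ (y - x) / x := by
  have h := log_le_sub_one_of_pos (div_pos hy hx)
  rwa [log_div hy.ne' hx.ne', div_sub_one hx.ne'] at h

theorem sub_div_le_log_sub_log {x y : ℝ} (hx : 0 < x) (hy : 0 < y) :
    (y - x) / y ≤ log y - log x := by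
  have h := log_sub_log_le_sub_div hy hx
  have hneg : (x - y) / y = -((y - x) / y) := by ring
  linarith

end Real

section

variable {x r : ℝ}

theorem log_add_three_sub_log_le (hx : 0 < x) : log (x + 3) - log x ≤ 3 / x := by
  simpa using log_sub_log_le_sub_div hx (by linarith : 0 < x + 3)

theorem one_div_le_log_add_two_sub_log (hx : 0 < x) :
    1 / (x + 2) ≤ log (x + 2) - log (x + 1) := by
  have h := sub_div_le_log_sub_log (by linarith : 0 < x + 1) (by linarith : 0 < x + 2)
  rwa [show x + 2 - (x + 1) = 1 by ring] at h

theorem log_add_three_le (hx : 0 < x) : log (x + 3) ≤ log 3 + x / 3 := by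
  have h := log_sub_log_le_sub_div (by norm_num : (0 : ℝ) < 3) (by linarith : 0 < x + 3)
  rw [add_sub_cancel_right] at h
  linarith

theorem log_two_sub_half_le (hx : 0 < x) :
    log 2 - x / 2 ≤ log (x + 2) - log (x + 1) := by
  have h := log_sub_log_le_sub_div (by linarith : 0 < x + 2) (by linarith : 0 < 2 * (x + 1))
  have hx2 : x / (x + 2) ≤ x / 2 := div_le_div_of_nonneg_left hx.le two_pos (by linarith)
  rw [log_mul two_ne_zero (by linarith), show 2 * (x + 1) - (x + 2) = x by ring] at h
  linarith

theorem sixteen_mul_lt_two_rpow (hr : 200 ≤ r) : 16 * r < 2 ^ r := by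
  have h := quadratic_le_exp_of_nonneg (mul_nonneg (by linarith : 0 ≤ r) (log_nonneg one_le_two))
  rw [rpow_def_of_pos two_pos, mul_comm (log 2)]
  nlinarith [log_two_gt_d9, mul_le_mul_of_nonneg_left hr (log_nonneg one_le_two)]

theorem four_mul_two_rpow_neg_mul_lt (hr : 200 ≤ r) : 4 * (2 : ℝ) ^ (-r) * r < 1 / 4 := by
  rw [rpow_neg zero_le_two, mul_right_comm, ← div_eq_mul_inv, div_lt_iff₀ (by positivity)]
  linarith [sixteen_mul_lt_two_rpow hr]

theorem log_four_mul_two_rpow_neg : log (4 * 2 ^ (-r)) = (2 - r) * log 2 := by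
  rw [log_mul four_ne_zero (rpow_pos_of_pos two_pos _).ne', log_rpow two_pos,
    show (4 : ℝ) = 2 ^ 2 by norm_num, log_pow]
  push_cast
  ring

theorem four_mul_two_rpow_neg_lt_half (hr : 3 < r) : 4 * (2 : ℝ) ^ (-r) < 1 / 2 := by
  have h := rpow_lt_rpow_of_exponent_lt one_lt_two (neg_lt_neg hr)
  norm_num at h
  linarith

theorem log_add_three_sub_log_lt_of_one_le (hr : 9 < r) (hx : 1 ≤ x) :
    log (x + 3) - log x < r * (log (x + 2) - log (x + 1)) := by
  have hx0 : 0 < x := by linarith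
  have h3x : 3 / x < r * (1 / (x + 2)) := by
    rw [mul_one_div, div_lt_div_iff₀ hx0 (by linarith)]
    nlinarith
  calc log (x + 3) - log x ≤ 3 / x := log_add_three_sub_log_le hx0
    _ < r * (1 / (x + 2)) := h3x
    _ ≤ r * (log (x + 2) - log (x + 1)) :=
      mul_le_mul_of_nonneg_left (one_div_le_log_add_two_sub_log hx0) (by linarith)

theorem log_add_three_sub_log_lt_of_le_one (hr : 200 ≤ r) (htx : 4 * 2 ^ (-r) ≤ x)
    (hx : x ≤ 1) : log (x + 3) - log x < r * (log (x + 2) - log (x + 1)) := by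
  set t : ℝ := 4 * 2 ^ (-r)
  set G : ℝ → ℝ := fun y ↦ r * log 2 - log 3 + log y - (r / 2 + 1 / 3) * y with hG
  have ht : 0 < t := by positivity
  have hx0 : 0 < x := ht.trans_le htx
  have hconcave : ConcaveOn ℝ (Ioi 0) G :=
    ((strictConcaveOn_log_Ioi.concaveOn.add_const (r * log 2 - log 3)).sub
      ((convexOn_id (convex_Ioi 0)).smul (by positivity : (0 : ℝ) ≤ r / 2 + 1 / 3))).congr
      fun y _ ↦ by simp only [hG, Pi.sub_apply, Pi.add_apply, id, smul_eq_mul]; ring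
  have hGt : 0 < G t := by
    have hrt : t * r < 1 / 4 := four_mul_two_rpow_neg_mul_lt hr
    have hkt : (r / 2 + 1 / 3) * t ≤ t * r := by nlinarith
    have hlog43 : 1 / 4 ≤ 2 * log 2 - log 3 := by
      have h := sub_div_le_log_sub_log (by norm_num : (0 : ℝ) < 3) (by norm_num : (0 : ℝ) < 4)
      rw [show (4 : ℝ) = 2 ^ 2 by norm_num, log_pow] at h
      norm_num at h
      linarith
    simp only [hG, t, log_four_mul_two_rpow_neg]
    linarith
  have hG1 : 0 < G 1 := by
    simp only [hG, log_one]
    nlinarith [log_two_gt_d9, log_three_lt_d9]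
  have hGx : 0 < G x := by
    have := hconcave.ge_on_segment (mem_Ioi.2 ht) (mem_Ioi.2 one_pos)
      (by rw [segment_eq_Icc (htx.trans hx)]; exact ⟨htx, hx⟩)
    exact (lt_min hGt hG1).trans_le this
  calc log (x + 3) - log x ≤ log 3 + x / 3 - log x := by linarith [log_add_three_le hx0]
    _ < r * (log 2 - x / 2) := by simp only [hG] at hGx; linarith
    _ ≤ r * (log (x + 2) - log (x + 1)) :=
      mul_le_mul_of_nonneg_left (log_two_sub_half_le hx0) (by linarith)

theorem log_add_three_sub_log_lt (hr : 200 ≤ r) (htx : 4 * 2 ^ (-r) ≤ x) :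
    log (x + 3) - log x < r * (log (x + 2) - log (x + 1)) := by
  rcases le_total x 1 with hx | hx
  · exact log_add_three_sub_log_lt_of_le_one hr htx hx
  · exact log_add_three_sub_log_lt_of_one_le (by linarith) hx

end

theorem lt_four_mul_two_rpow_of_pow_mul_pow_eq {x : ℝ} {D n : ℕ}
    (hr : 200 ≤ (n : ℝ) / D) (hx : 0 < x)
    (h : (x + 3) ^ D * (x + 1) ^ n = x ^ D * (x + 2) ^ n) :
    x < 4 * (2 : ℝ) ^ (-((n : ℝ) / D)) := by
  have hlog : (D : ℝ) * (log (x + 3) - log x) = n * (log (x + 2) - log (x + 1)) := by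
    have := congrArg log h
    rw [log_mul (by positivity) (by positivity), log_mul (by positivity) (by positivity),
      log_pow, log_pow, log_pow, log_pow] at this
    linarith
  have hD : (D : ℝ) ≠ 0 := by
    rintro hD
    rw [hD, div_zero] at hr
    norm_num at hr
  by_contra! htx
  have := mul_lt_mul_of_pos_left (log_add_three_sub_log_lt hr htx)
    (lt_of_le_of_ne (Nat.cast_nonneg D) hD.symm)
  rw [hlog, ← mul_assoc, mul_div_cancel₀ _ hD] at this
  exact lt_irrefl _ this

theorem stmt14 :
    ∃ C : ℝ, 0 < C ∧ ∀ s D : ℕ, 0 < s → 0 < D → Odd s → 3 * D ≤ s →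
      C ≤ (s : ℝ) / (D * Real.log D) →
      ∀ x0 : ℝ, 0 < x0 →
        (x0 + 3) ^ D * (x0 + 1) ^ (s + 1) = x0 ^ D * (x0 + 2) ^ (s + 1) →
        x0 < 4 * (2 : ℝ) ^ (-(((s : ℝ) + 1) / D)) ∧ x0 < 1 / 2 := by
  refine ⟨300, by norm_num, fun s D _ hD _ _ hC x0 hx0 h ↦ ?_⟩
  have hD2 : 2 ≤ D := by
    by_contra! hD1
    obtain rfl : D = 1 := by omega
    norm_num at hC
  have hlogD : log 2 ≤ log D := log_le_log two_pos (by exact_mod_cast hD2)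
  have hr : 200 ≤ ((s : ℝ) + 1) / D := by
    have hlog2 := log_two_gt_d9
    rw [le_div_iff₀ (by positivity)]
    rw [le_div_iff₀ (mul_pos (by positivity) (by linarith))] at hC
    nlinarith
  have hlt := lt_four_mul_two_rpow_of_pow_mul_pow_eq (n := s + 1) (by push_cast; exact hr) hx0 h
  push_cast at hlt
  exact ⟨hlt, hlt.trans (four_mul_two_rpow_neg_lt_half (by linarith))⟩
end

section
/- Let t ≥ 1 be an integer, let x_1 < x_2 < … < x_t be positive real numbers, and let α_1 < α_2 < … < α_t be non-negative integers. Then the determinant of the t×t matrix whose (i,j) entry is x_j^{α_i} is strictly positive. -/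
/-!
A vanishing determinant would give a nonzero vector `a` with `∑ᵢ aᵢ x_j^{αᵢ} = 0` for all `j`, i.e.
a polynomial with at most `t` nonzero coefficients and `t` distinct positive roots; Descartes' rule
of signs forbids this, so the determinant never vanishes on positive distinct nodes. For the sign,
induct on `t`: expanding along the last column, the determinant is a polynomial in the last node `s`
whose leading coefficient is the `(t-1)`-determinant, positive by induction. This polynomial has no
root for `s ≥ x_t`, and it is positive for large `s`, so it is positive at `s = x_t`.
-/

open Polynomial Matrix Filter Function

theorem Fin.strictMono_snoc {α : Type*} [Preorder α] {n : ℕ} {y : Fin n → α} (hy : StrictMono y)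
    {s : α} (hs : ∀ j, y j < s) : StrictMono (Fin.snoc y s : Fin (n + 1) → α) := by
  intro i j hij
  induction j using Fin.lastCases with
  | last =>
    induction i using Fin.lastCases with
    | last => exact absurd hij (lt_irrefl _)
    | cast i => simpa using hs i
  | cast j =>
    induction i using Fin.lastCases with
    | last => exact absurd hij (not_lt.2 (Fin.le_last _))
    | cast i => simpa using hy (Fin.castSucc_lt_castSucc_iff.1 hij)

namespace Polynomial

section SignVariations

variable {R : Type*} [Semiring R] [LinearOrder R]

theorem length_filter_coeffList_ne_zero (P : R[X]) :
    (P.coeffList.filter (· ≠ 0)).length = P.support.card := by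
  by_cases hP : P = 0
  · simp [hP]
  have hsupp : P.support = (Finset.range (P.natDegree + 1)).filter (P.coeff · ≠ 0) := by
    ext n
    simpa [Nat.lt_succ_iff] using fun h => le_natDegree_of_ne_zero h
  rw [hsupp, coeffList, withBotSucc_degree_eq_natDegree_add_one hP, List.filter_map]
  simp only [List.filter_reverse, List.length_map, List.length_reverse, Finset.card_def,
    Finset.filter_val, Finset.range_val, Multiset.range, Multiset.filter_coe, Multiset.coe_card]
  congr 1

theorem signVariations_lt_card_support {P : R[X]} (hP : P ≠ 0) :
    P.signVariations < P.support.card := by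
  have hlen : ((P.coeffList.map SignType.sign).filter (· ≠ 0)).length = P.support.card := by
    rw [← length_filter_coeffList_ne_zero, List.filter_map, List.length_map]
    congr 2
    ext c
    simp [sign_eq_zero_iff]
  have hdestutter :=
    (List.destutter_sublist (· ≠ ·) ((P.coeffList.map SignType.sign).filter (· ≠ 0))).length_le
  have hpos : 0 < P.support.card := Finset.card_pos.2 (support_nonempty.2 hP)
  unfold signVariations
  omega

end SignVariations

theorem card_lt_card_support_of_forall_pos_isRoot {R : Type*} [CommRing R] [LinearOrder R]
    [IsStrictOrderedRing R] {P : R[X]} (hP : P ≠ 0) {S : Finset R}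
    (hS : ∀ x ∈ S, 0 < x ∧ P.IsRoot x) : S.card < P.support.card := by
  have hle : S.val ≤ P.roots :=
    (Multiset.le_iff_subset S.nodup).2 fun x hx => (mem_roots hP).2 (hS x hx).2
  calc S.card = S.val.countP (0 < ·) := (Multiset.countP_eq_card.2 fun x hx => (hS x hx).1).symm
    _ ≤ P.roots.countP (0 < ·) := Multiset.countP_le_of_le _ hle
    _ ≤ P.signVariations := roots_countP_pos_le_signVariations P
    _ < P.support.card := signVariations_lt_card_support hP

section Sparse

variable {R ι : Type*} [Semiring R] [Fintype ι]

theorem coeff_sum_C_mul_X_pow_of_injective {α : ι → ℕ} (hα : Injective α) (a : ι → R) (i : ι) :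
    (∑ j, C (a j) * X ^ α j).coeff (α i) = a i := by
  rw [finsetSum_coeff, Finset.sum_eq_single i]
  · simp
  · intro j _ hji
    simp [hα.ne hji.symm]
  · simp

theorem card_support_sum_C_mul_X_pow_le (α : ι → ℕ) (a : ι → R) :
    (∑ i, C (a i) * X ^ α i).support.card ≤ Fintype.card ι := by
  classical
  calc _ ≤ (Finset.univ.image α).card := by
        refine Finset.card_le_card fun m hm => ?_
        contrapose! hm
        simp_all [eq_comm]
    _ ≤ Fintype.card ι := Finset.card_image_le

theorem leadingCoeff_sum_C_mul_X_pow_of_strictMono {n : ℕ} {α : Fin (n + 1) → ℕ}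
    (hα : StrictMono α) {a : Fin (n + 1) → R} (ha : a (Fin.last n) ≠ 0) :
    (∑ i, C (a i) * X ^ α i).leadingCoeff = a (Fin.last n) := by
  have hcoeff := coeff_sum_C_mul_X_pow_of_injective hα.injective a (Fin.last n)
  have hdeg : (∑ i, C (a i) * X ^ α i).natDegree = α (Fin.last n) :=
    le_antisymm
      (natDegree_sum_le_of_forall_le _ _ fun i _ =>
        (natDegree_C_mul_X_pow_le _ _).trans (hα.monotone (Fin.le_last i)))
      (le_natDegree_of_ne_zero (hcoeff ▸ ha))
  rw [leadingCoeff, hdeg, hcoeff]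

end Sparse

theorem eventually_atTop_eval_pos {P : ℝ[X]} (hP : 0 < P.leadingCoeff) :
    ∀ᶠ x in atTop, 0 < P.eval x :=
  P.isEquivalent_atTop_lead.eventually_pos <|
    (eventually_gt_atTop 0).mono fun _ hx => mul_pos hP (pow_pos hx _)

theorem eval_pos_of_leadingCoeff_pos {P : ℝ[X]} (hP : 0 < P.leadingCoeff) {a : ℝ}
    (hroot : ∀ x, a ≤ x → ¬P.IsRoot x) : 0 < P.eval a := by
  obtain ⟨b, hb, hab⟩ := ((eventually_atTop_eval_pos hP).and (eventually_ge_atTop a)).exists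
  by_contra! ha
  obtain ⟨c, hc, hc0⟩ := intermediate_value_Icc hab P.continuous.continuousOn ⟨ha, hb.le⟩
  exact hroot c hc.1 hc0

end Polynomial

namespace Matrix

theorem det_of_pow_ne_zero {K ι : Type*} [Field K] [LinearOrder K] [IsStrictOrderedRing K]
    [Fintype ι] [DecidableEq ι] {y : ι → K} (hy : Injective y) (hy₀ : ∀ j, 0 < y j)
    {α : ι → ℕ} (hα : Injective α) : (of fun i j => y j ^ α i).det ≠ 0 := by
  intro hdet
  obtain ⟨a, ha, hva⟩ := exists_vecMul_eq_zero_iff.2 hdet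
  set P : K[X] := ∑ i, C (a i) * X ^ α i with hP_def
  have hP : P ≠ 0 := by
    obtain ⟨i, hi⟩ := Function.ne_iff.1 ha
    intro h
    rw [← coeff_sum_C_mul_X_pow_of_injective hα a i, ← hP_def, h] at hi
    exact hi rfl
  have hroot (j : ι) : P.IsRoot (y j) := by
    simpa [P, vecMul, dotProduct, eval_finsetSum] using congrFun hva j
  have hcard := card_lt_card_support_of_forall_pos_isRoot hP (S := Finset.univ.image y) <| by
    simpa using fun j => ⟨hy₀ j, hroot j⟩
  rw [Finset.card_image_of_injective _ hy] at hcard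
  exact (card_support_sum_C_mul_X_pow_le α a).not_gt hcard

theorem det_of_pow_snoc {R : Type*} [CommRing R] {n : ℕ} (y : Fin n → R) (s : R)
    (α : Fin (n + 1) → ℕ) :
    (of fun i j => (Fin.snoc y s : Fin (n + 1) → R) j ^ α i).det =
      (∑ i : Fin (n + 1), C ((-1) ^ ((i : ℕ) + n) *
        (of fun k l => y l ^ α (i.succAbove k)).det) * X ^ α i).eval s := by
  rw [det_succ_column _ (Fin.last n), eval_finsetSum]
  refine Finset.sum_congr rfl fun i _ => ?_
  simp [Fin.succAbove_last, submatrix]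
  ring

end Matrix

theorem stmt15_general (t : ℕ) (x : Fin t → ℝ) (hx : StrictMono x)
    (hxpos : ∀ i, 0 < x i) (α : Fin t → ℕ) (hα : StrictMono α) :
    0 < (Matrix.of fun i j : Fin t => x j ^ α i).det := by
  induction t with
  | zero => simp
  | succ t ih =>
    set y : Fin t → ℝ := Fin.init x
    have hy : StrictMono y := hx.comp Fin.strictMono_castSucc
    set a : Fin (t + 1) → ℝ := fun i => (-1) ^ ((i : ℕ) + t) *
      (of fun k l => y l ^ α (i.succAbove k)).det
    have ha : 0 < a (Fin.last t) := by
      simpa [a, Fin.succAbove_last, Even.neg_one_pow ⟨t, rfl⟩] using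
        ih y hy (fun i => hxpos _) (α ∘ Fin.castSucc) (hα.comp Fin.strictMono_castSucc)
    have hlead := leadingCoeff_sum_C_mul_X_pow_of_strictMono (a := a) hα ha.ne'
    have hroot (s : ℝ) (hs : x (Fin.last t) ≤ s) : ¬IsRoot (∑ i, C (a i) * X ^ α i) s := by
      rw [IsRoot, ← det_of_pow_snoc]
      have hys (j : Fin t) : y j < s := (hx (Fin.castSucc_lt_last j)).trans_le hs
      refine det_of_pow_ne_zero (Fin.strictMono_snoc hy hys).injective (fun j => ?_) hα.injective
      induction j using Fin.lastCases with
      | last => simpa using (hxpos _).trans_le hs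
      | cast j => simpa [y, Fin.init] using hxpos _
    rw [← Fin.snoc_init_self x, det_of_pow_snoc]
    exact eval_pos_of_leadingCoeff_pos (hlead ▸ ha) hroot

theorem stmt15 (t : ℕ) (ht : 1 ≤ t) (x : Fin t → ℝ) (hx : StrictMono x)
    (hxpos : ∀ i, 0 < x i) (α : Fin t → ℕ) (hα : StrictMono α) :
    0 < (Matrix.of fun i j : Fin t => x j ^ α i).det :=
  stmt15_general t x hx hxpos α hα
end

section
/- Let t ≥ 1 be an integer, let α_1 < α_2 < … < α_t be real numbers, and let c_1, …, c_t be real numbers, not all zero. Then the function f(x) = Σ_{i=1}^{t} c_i x^{α_i}, defined for x > 0, has at most t-1 zeros in (0, ∞); that is, the set {x > 0 : f(x) = 0} has cardinality at most t-1. -/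
/-!
Induction on the number of terms. Dividing by `x ^ α₀` does not change the positive zeros and turns
the smallest exponent into `0`, so the derivative of the quotient is a sum of one term fewer. By
Rolle's theorem a zero of the derivative lies strictly between any two zeros, so a function has at
most one positive zero more than its derivative.
-/

open Set

theorem Set.finite_and_ncard_le_of_interleaved {α : Type*} [LinearOrder α] {S T : Set α}
    (hT : T.Finite) (h : ∀ x ∈ S, ∀ y ∈ S, x < y → ∃ z ∈ T, x < z ∧ z < y) :
    S.Finite ∧ S.ncard ≤ T.ncard + 1 := by
  have hsub : ∀ s : Finset α, ↑s ⊆ S → s.card ≤ T.ncard + 1 := fun s hs => by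
    rw [ncard_eq_toFinset_card T hT]
    refine Finset.card_le_of_interleaved fun x hx y hy hxy _ => ?_
    obtain ⟨z, hz, hxz, hzy⟩ := h x (hs hx) y (hs hy) hxy
    exact ⟨z, hT.mem_toFinset.2 hz, hxz, hzy⟩
  have hS : S.Finite := by
    by_contra hS
    obtain ⟨s, hs, hcard⟩ := Set.Infinite.exists_subset_card_eq hS (T.ncard + 2)
    have := hsub s hs
    omega
  refine ⟨hS, ?_⟩
  rw [ncard_eq_toFinset_card S hS]
  exact hsub _ (by simp)

theorem finite_and_ncard_zeros_le_of_hasDerivAt {f f' : ℝ → ℝ} {U : Set ℝ} (hU : U.OrdConnected)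
    (hf : ∀ x ∈ U, HasDerivAt f (f' x) x) (hf' : {x ∈ U | f' x = 0}.Finite) :
    {x ∈ U | f x = 0}.Finite ∧ {x ∈ U | f x = 0}.ncard ≤ {x ∈ U | f' x = 0}.ncard + 1 := by
  refine Set.finite_and_ncard_le_of_interleaved hf' fun a ha b hb hab => ?_
  have hIcc : Icc a b ⊆ U := hU.out ha.1 hb.1
  have hcont : ContinuousOn f (Icc a b) := fun x hx =>
    (hf x (hIcc hx)).continuousAt.continuousWithinAt
  obtain ⟨z, hz, hz0⟩ := exists_hasDerivAt_eq_zero hab hcont (ha.2.trans hb.2.symm)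
    fun x hx => hf x (hIcc (Ioo_subset_Icc_self hx))
  exact ⟨z, ⟨hIcc (Ioo_subset_Icc_self hz), hz0⟩, hz⟩

theorem setOf_sum_mul_rpow_eq_zero_eq_sub {ι : Type*} [Fintype ι] (c α : ι → ℝ) (β : ℝ) :
    {x : ℝ | 0 < x ∧ ∑ i, c i * x ^ α i = 0} =
      {x : ℝ | 0 < x ∧ ∑ i, c i * x ^ (α i - β) = 0} := by
  ext x
  simp only [mem_ofPred_eq, and_congr_right_iff]
  intro hx
  have hfactor : ∑ i, c i * x ^ α i = x ^ β * ∑ i, c i * x ^ (α i - β) := by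
    simp only [Finset.mul_sum, Real.rpow_sub hx]
    refine Finset.sum_congr rfl fun i _ => ?_
    field_simp
  rw [hfactor, mul_eq_zero, or_iff_right (Real.rpow_pos_of_pos hx β).ne']

theorem hasDerivAt_sum_mul_rpow_sub_zero {t : ℕ} (c α : Fin (t + 1) → ℝ) {x : ℝ} (hx : 0 < x) :
    HasDerivAt (fun x => ∑ i, c i * x ^ (α i - α 0))
      (∑ j : Fin t, c j.succ * (α j.succ - α 0) * x ^ (α j.succ - α 0 - 1)) x := by
  have h := HasDerivAt.fun_sum (u := Finset.univ) fun i _ =>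
    (Real.hasDerivAt_rpow_const (p := α i - α 0) (Or.inl hx.ne')).const_mul (c i)
  refine h.congr_deriv ?_
  simp only [Fin.sum_univ_succ, sub_self, zero_mul, mul_zero, zero_add, mul_assoc]

theorem stmt16_general (t : ℕ) (α : Fin t → ℝ) (hα : StrictMono α)
    (c : Fin t → ℝ) (hc : ∃ i, c i ≠ 0) :
    {x : ℝ | 0 < x ∧ ∑ i, c i * x ^ α i = 0}.Finite ∧
    {x : ℝ | 0 < x ∧ ∑ i, c i * x ^ α i = 0}.ncard ≤ t - 1 := by
  induction t with
  | zero => exact hc.choose.elim0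
  | succ t ih =>
    rw [setOf_sum_mul_rpow_eq_zero_eq_sub c α (α 0)]
    by_cases htail : ∃ j : Fin t, c j.succ ≠ 0
    · obtain ⟨j, hj⟩ := htail
      have hβ : StrictMono fun j : Fin t => α j.succ - α 0 - 1 := fun a b hab => by
        simpa using hα (Fin.succ_lt_succ_iff.2 hab)
      obtain ⟨hfin, hcard⟩ := ih _ hβ (fun j => c j.succ * (α j.succ - α 0))
        ⟨j, mul_ne_zero hj (sub_pos.2 (hα j.succ_pos)).ne'⟩
      obtain ⟨hfin', hcard'⟩ := finite_and_ncard_zeros_le_of_hasDerivAt ordConnected_Ioi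
        (fun x hx => hasDerivAt_sum_mul_rpow_sub_zero c α hx) hfin
      refine ⟨hfin', hcard'.trans ((Nat.add_le_add_right hcard 1).trans ?_)⟩
      have := j.pos
      omega
    · push Not at htail
      have hc0 : c 0 ≠ 0 := by
        obtain ⟨i, hi⟩ := hc
        rcases Fin.eq_zero_or_eq_succ i with rfl | ⟨j, rfl⟩
        · exact hi
        · exact absurd (htail j) hi
      have hempty : {x : ℝ | 0 < x ∧ ∑ i, c i * x ^ (α i - α 0) = 0} = ∅ := by
        simp [Fin.sum_univ_succ, htail, hc0]
      simp [hempty]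

theorem stmt16 (t : ℕ) (ht : 1 ≤ t) (α : Fin t → ℝ) (hα : StrictMono α)
    (c : Fin t → ℝ) (hc : ∃ i, c i ≠ 0) :
    {x : ℝ | 0 < x ∧ ∑ i, c i * x ^ α i = 0}.Finite ∧
    {x : ℝ | 0 < x ∧ ∑ i, c i * x ^ α i = 0}.ncard ≤ t - 1 :=
  stmt16_general t α hα c hc
end

section
/- Let D be a positive integer, α a rational number that is an integer multiple of 1/D, and n a positive integer. Define F_α(t) = D^n · (∏_{j=1}^{n} (t + α + j/D)) / (∏_{j=0}^{n} (t+j)). Then there exist integers A_{α,0}, …, A_{α,n} such that F_α(t) = Σ_{k=0}^{n} A_{α,k}/(t+k) for every real t ∉ {0, -1, …, -n}; moreover (-1)^k A_{α,k} = C(n,k) · (∏_{j=1}^{n} (D(α-k)+j))/n!, which equals C(n,k)·C(D(α-k)+n, n) if α-k ≥ 0, equals 0 if -n/D ≤ α-k < 0, and equals (-1)^n C(n,k)·C(D(k-α)-1, n) if α-k < -n/D. -/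
open Finset Polynomial

lemma descPoch_prod (n : ℕ) (x : ℚ) :
    (descPochhammer ℚ n).eval x = ∏ i ∈ range n, (x - i) := by
  induction n with
  | zero => simp
  | succ n ih => rw [descPochhammer_succ_eval, ih, prod_range_succ]

lemma fact_mul_ringChoose (n : ℕ) (x : ℚ) :
    (n.factorial : ℚ) * Ring.choose x n = ∏ i ∈ range n, (x - i) := by
  have h := Ring.descPochhammer_eq_factorial_smul_choose (R := ℚ) x n
  rw [← aeval_eq_smeval, aeval_def, ← eval_map, descPochhammer_map] at h
  rw [← descPoch_prod, h, nsmul_eq_mul]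

lemma fact_mul_ringChoose' (n : ℕ) (x : ℚ) :
    (n.factorial : ℚ) * Ring.choose (x + n) n = ∏ j ∈ Icc 1 n, (x + j) := by
  rw [fact_mul_ringChoose]
  rw [← prod_range_reflect]
  have h1 : ∀ j ∈ range n, x + n - (n - 1 - j : ℕ) = x + (j+1) := by
    intro j hj
    rw [mem_range] at hj
    have : (n - 1 - j : ℕ) = n - 1 - j := rfl
    push_cast [Nat.cast_sub (by omega : j ≤ n - 1), Nat.cast_sub (by omega : 1 ≤ n)]
    ring
  rw [prod_congr rfl h1]
  rw [← Finset.Ico_add_one_right_eq_Icc, prod_Ico_eq_prod_range]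
  simp [add_comm]

lemma ringChoose_cast (n : ℕ) (a : ℤ) :
    ((Ring.choose a n : ℤ) : ℚ) = Ring.choose ((a : ℚ)) n := by
  have h1 := Ring.descPochhammer_eq_factorial_smul_choose (R := ℤ) a n
  rw [← eval_eq_smeval, nsmul_eq_mul] at h1
  have h2 := fact_mul_ringChoose n (a : ℚ)
  rw [← descPoch_prod, ← descPochhammer_eval_cast, h1] at h2
  have hf : (n.factorial : ℚ) ≠ 0 := Nat.cast_ne_zero.mpr n.factorial_ne_zero
  push_cast at h2
  exact (mul_left_cancel₀ hf h2).symm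

lemma erase_prod_eq (n k : ℕ) (hk : k ≤ n) :
    ∏ j ∈ (range (n+1)).erase k, ((j : ℚ) - k) =
      (-1) ^ k * k.factorial * (n - k).factorial := by
  have hsplit : (range (n+1)).erase k = range k ∪ Ico (k+1) (n+1) := by
    ext j; simp [Finset.mem_erase, Finset.mem_range, Finset.mem_union, Finset.mem_Ico]; omega
  rw [hsplit, prod_union (by simp [Finset.disjoint_left]; omega)]
  have h1 : ∏ j ∈ range k, ((j : ℚ) - k) = (-1) ^ k * k.factorial := by
    have : ∀ j ∈ range k, ((j : ℚ) - k) = -((k - 1 - j : ℕ) + 1) := by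
      intro j hj; rw [mem_range] at hj
      push_cast [Nat.cast_sub (by omega : j ≤ k - 1), Nat.cast_sub (by omega : 1 ≤ k)]
      ring
    have e2 : ∀ j ∈ range k, -(((k - 1 - j : ℕ) : ℚ) + 1) =
        (-1) * (((k - 1 - j : ℕ) : ℚ) + 1) := by intro j _; ring
    rw [prod_congr rfl this, prod_congr rfl e2, prod_mul_distrib, prod_const, card_range,
      prod_range_reflect (fun j => ((j:ℚ)+1)) k]
    push_cast [← prod_range_add_one_eq_factorial]
    ring
  have h2 : ∏ j ∈ Ico (k+1) (n+1), ((j : ℚ) - k) = (n - k).factorial := by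
    rw [prod_Ico_eq_prod_range]
    have : ∀ i ∈ range (n + 1 - (k+1)), ((k + 1 + i : ℕ) : ℚ) - k = (i + 1 : ℕ) := by
      intro i _; push_cast; ring
    rw [prod_congr rfl this, ← Nat.cast_prod, prod_range_add_one_eq_factorial,
      show n + 1 - (k+1) = n - k by omega]
  rw [h1, h2]

lemma ringChoose_reflect (n : ℕ) (x : ℚ) :
    Ring.choose (x + (n:ℚ)) n = (-1)^n * Ring.choose (-x - 1) n := by
  have hf : (n.factorial : ℚ) ≠ 0 := Nat.cast_ne_zero.mpr n.factorial_ne_zero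
  have h1 := fact_mul_ringChoose n (x + n)
  have h2 := fact_mul_ringChoose n (-x - 1)
  have h3 : ∏ i ∈ range n, (x + n - i) = (-1)^n * ∏ i ∈ range n, (-x - 1 - i) := by
    rw [← prod_range_reflect (fun i => -x - 1 - (i:ℚ)) n]
    have : ∀ i ∈ range n, x + (n:ℚ) - i = (-1) * (-x - 1 - ((n - 1 - i : ℕ) : ℚ)) := by
      intro i hi; rw [mem_range] at hi
      push_cast [Nat.cast_sub (by omega : i ≤ n - 1), Nat.cast_sub (by omega : 1 ≤ n)]
      ring
    rw [prod_congr rfl this, prod_mul_distrib, prod_const, card_range]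
  apply mul_left_cancel₀ hf
  rw [h1, h3, ← h2]; ring




theorem stmt19 (D n : ℕ) (hD : 0 < D) (hn : 0 < n) (α : ℚ)
    (hα : ∃ m : ℤ, α = (m : ℚ) / D) :
    ∃ A : ℕ → ℤ,
      (∀ t : ℝ, (∀ k : ℕ, k ≤ n → t ≠ -(k : ℝ)) →
        (D : ℝ) ^ n * (∏ j ∈ Finset.Icc 1 n, (t + (α : ℝ) + (j : ℝ) / D)) /
            (∏ j ∈ Finset.range (n + 1), (t + j)) =
          ∑ k ∈ Finset.range (n + 1), (A k : ℝ) / (t + k)) ∧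
      ∀ k : ℕ, k ≤ n →
        (((-1) ^ k * A k : ℚ) =
            (n.choose k : ℚ) * (∏ j ∈ Finset.Icc 1 n, ((D : ℚ) * (α - k) + j)) /
              n.factorial) ∧
        (0 ≤ α - k → ((-1) ^ k * A k : ℚ) =
            (n.choose k : ℚ) * Ring.choose ((D : ℚ) * (α - k) + n) n) ∧
        (-(n : ℚ) / D ≤ α - k ∧ α - k < 0 → A k = 0) ∧
        (α - k < -(n : ℚ) / D → ((-1) ^ k * A k : ℚ) =
            (-1) ^ n * (n.choose k : ℚ) * Ring.choose ((D : ℚ) * ((k : ℚ) - α) - 1) n) := by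
  obtain ⟨m, hm⟩ := hα
  have hD0 : (D : ℚ) ≠ 0 := Nat.cast_ne_zero.mpr hD.ne'
  have hDR : (D : ℝ) ≠ 0 := Nat.cast_ne_zero.mpr hD.ne'
  have hf : (n.factorial : ℚ) ≠ 0 := Nat.cast_ne_zero.mpr n.factorial_ne_zero
  set A : ℕ → ℤ := fun k => (-1)^k * (n.choose k : ℤ) * Ring.choose ((m - D*k + n : ℤ)) n
    with hA
  -- cast of A
  have hAq : ∀ k : ℕ, (A k : ℚ) =
      (-1)^k * (n.choose k : ℚ) * Ring.choose ((m : ℚ) - D*k + n) n := by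
    intro k
    rw [hA]
    push_cast [ringChoose_cast]
    norm_num
  have hx : ∀ k : ℕ, (D : ℚ) * (α - k) = (m : ℚ) - D*k := by
    intro k; rw [hm]; field_simp
  -- key residue computation
  have keyA : ∀ k : ℕ, k ≤ n → (A k : ℚ) * ((-1)^k * k.factorial * (n-k).factorial) =
      ∏ j ∈ Finset.Icc 1 n, ((m : ℚ) - D*k + j) := by
    intro k hk
    rw [hAq k, ← fact_mul_ringChoose' n ((m:ℚ) - D*k)]
    have h5 : ((n.choose k : ℚ)) * (k.factorial * (n-k).factorial) = n.factorial := by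
      rw [← Nat.choose_mul_factorial_mul_factorial hk]; push_cast; ring
    have hsq : ((-1:ℚ)^k) * ((-1:ℚ)^k) = 1 := by
      rw [← pow_add, ← two_mul, pow_mul]; norm_num
    linear_combination (Ring.choose ((m:ℚ) - ↑D*↑k + ↑n) n) *
        ((k.factorial : ℚ) * ((n-k).factorial : ℚ) * ((n.choose k : ℚ))) * hsq +
      (Ring.choose ((m:ℚ) - ↑D*↑k + ↑n) n) * h5
  -- the polynomial identity over ℚ
  set p : Polynomial ℚ := ∏ j ∈ Finset.Icc 1 n,
      (Polynomial.C (D:ℚ) * Polynomial.X + Polynomial.C ((m:ℚ) + j)) with hp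
  set g : Polynomial ℚ := ∑ k ∈ Finset.range (n+1),
      Polynomial.C ((A k : ℚ)) * ∏ j ∈ (Finset.range (n+1)).erase k,
        (Polynomial.X + Polynomial.C ((j:ℚ))) with hg
  have hpg : p = g := by
    apply Polynomial.eq_of_degrees_lt_of_eval_index_eq (v := fun k : ℕ => -(k:ℚ))
      (Finset.range (n+1))
    · intro a ha b hb hab
      simp only [neg_inj, Nat.cast_inj] at hab
      exact hab
    · rw [hp, Polynomial.degree_prod]
      have h0 : ∀ j ∈ Finset.Icc 1 n, (Polynomial.C (D:ℚ) * Polynomial.X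
          + Polynomial.C ((m:ℚ) + j)).degree = 1 := fun j _ => Polynomial.degree_linear hD0
      rw [Finset.sum_congr rfl h0, Finset.sum_const, Nat.card_Icc, Finset.card_range]
      simp only [Nat.add_sub_cancel, nsmul_eq_mul, mul_one]
      exact_mod_cast Nat.lt_succ_self n
    · apply lt_of_le_of_lt (Polynomial.degree_sum_le _ _)
      rw [Finset.card_range]
      apply Finset.sup_lt_iff (WithBot.bot_lt_coe _) |>.mpr
      intro k hk
      apply lt_of_le_of_lt (Polynomial.degree_mul_le _ _)
      have h1 : (Polynomial.C ((A k : ℚ))).degree ≤ 0 := Polynomial.degree_C_le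
      have h2 : (∏ j ∈ (Finset.range (n+1)).erase k,
          (Polynomial.X + Polynomial.C ((j:ℚ)))).degree ≤ (n : WithBot ℕ) := by
        rw [Polynomial.degree_prod]
        have : ∀ j ∈ (Finset.range (n+1)).erase k,
            (Polynomial.X + Polynomial.C ((j:ℚ))).degree = 1 :=
          fun j _ => Polynomial.degree_X_add_C _
        rw [Finset.sum_congr rfl this, Finset.sum_const,
          Finset.card_erase_of_mem hk, Finset.card_range]
        simp only [Nat.add_sub_cancel, nsmul_eq_mul, mul_one]
        exact le_refl _
      calc (Polynomial.C ((A k : ℚ))).degree + _ ≤ 0 + (n : WithBot ℕ) := add_le_add h1 h2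
        _ = (n : WithBot ℕ) := zero_add _
        _ < ((n+1 : ℕ) : WithBot ℕ) := by exact_mod_cast Nat.lt_succ_self n
    · intro i hi
      rw [Finset.mem_range] at hi
      have hi' : i ≤ n := Nat.lt_succ_iff.mp hi
      -- eval p
      have hep : p.eval (-(i:ℚ)) = ∏ j ∈ Finset.Icc 1 n, ((m : ℚ) - D*i + j) := by
        rw [hp, Polynomial.eval_prod]
        apply Finset.prod_congr rfl
        intro j _
        simp only [Polynomial.eval_add, Polynomial.eval_mul, Polynomial.eval_C,
          Polynomial.eval_X]
        ring
      -- eval g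
      have heg : g.eval (-(i:ℚ)) = (A i : ℚ) * ((-1)^i * i.factorial * (n-i).factorial) := by
        rw [hg, Polynomial.eval_finset_sum]
        rw [Finset.sum_eq_single i]
        · simp only [Polynomial.eval_mul, Polynomial.eval_C, Polynomial.eval_prod,
            Polynomial.eval_add, Polynomial.eval_X]
          rw [← erase_prod_eq n i hi']
          congr 1
          apply Finset.prod_congr rfl
          intro j _; ring
        · intro k hk hki
          simp only [Polynomial.eval_mul, Polynomial.eval_C, Polynomial.eval_prod,
            Polynomial.eval_add, Polynomial.eval_X]
          have : i ∈ (Finset.range (n+1)).erase k :=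
            Finset.mem_erase.mpr ⟨Ne.symm hki, Finset.mem_range.mpr hi⟩
          rw [Finset.prod_eq_zero this (by ring)]
          ring
        · intro h; exact absurd (Finset.mem_range.mpr hi) h
      rw [hep, heg, keyA i hi']
  refine ⟨A, ?_, ?_⟩
  · -- real identity
    intro t ht
    have htj : ∀ j ∈ Finset.range (n+1), t + (j:ℝ) ≠ 0 := by
      intro j hj h
      exact ht j (Nat.lt_succ_iff.mp (Finset.mem_range.mp hj)) (by linarith)
    have hev := congrArg (Polynomial.aeval t) hpg
    rw [hp, hg, map_prod, map_sum] at hev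
    simp only [map_prod, map_mul, map_add, Polynomial.aeval_X, Polynomial.aeval_C,
      eq_ratCast] at hev
    push_cast at hev
    have hαR : (D:ℝ) * (α:ℝ) = (m:ℝ) := by
      rw [hm]; push_cast; field_simp
    have hnum : (D:ℝ)^n * ∏ j ∈ Finset.Icc 1 n, (t + (α:ℝ) + (j:ℝ)/D) =
        ∏ j ∈ Finset.Icc 1 n, ((D:ℝ) * t + ((m:ℝ) + j)) := by
      rw [show ((D:ℝ))^n = ∏ _j ∈ Finset.Icc 1 n, (D:ℝ) by
        rw [Finset.prod_const, Nat.card_Icc, Nat.add_sub_cancel], ← Finset.prod_mul_distrib]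
      refine Finset.prod_congr rfl fun j _ => ?_
      have hrw : (α:ℝ) = (m:ℝ)/(D:ℝ) := by rw [hm]; push_cast; ring
      rw [hrw]
      field_simp
      ring
    rw [hnum, hev, Finset.sum_div]
    refine Finset.sum_congr rfl fun k hk => ?_
    rw [← Finset.mul_prod_erase (Finset.range (n+1)) (fun j => t + (j:ℝ)) hk]
    have hQ : ∏ j ∈ (Finset.range (n+1)).erase k, (t + (j:ℝ)) ≠ 0 :=
      Finset.prod_ne_zero_iff.mpr fun j hj => htj j (Finset.mem_of_mem_erase hj)
    exact mul_div_mul_right _ _ hQ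
  · -- formulas
    intro k hk
    have hsq : ((-1:ℚ)^k) * ((-1:ℚ)^k) = 1 := by
      rw [← pow_add, ← two_mul, pow_mul]; norm_num
    have key : ((-1:ℚ))^k * (A k : ℚ) =
        (n.choose k : ℚ) * Ring.choose ((m:ℚ) - D*k + n) n := by
      rw [hAq k]
      linear_combination ((n.choose k : ℚ)) * Ring.choose ((m:ℚ) - ↑D*↑k + ↑n) n * hsq
    have hprodeq : ∏ j ∈ Finset.Icc 1 n, ((D:ℚ)*(α-k)+j) =
        ∏ j ∈ Finset.Icc 1 n, ((m:ℚ) - D*k + j) :=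
      Finset.prod_congr rfl fun j _ => by rw [hx k]
    refine ⟨?_, ?_, ?_, ?_⟩
    · rw [key, hprodeq, ← fact_mul_ringChoose' n ((m:ℚ)-D*k)]
      field_simp
    · intro _
      rw [key, hx k]
    · rintro ⟨h1, h2⟩
      have hDpos : (0:ℚ) < D := by positivity
      have e : α - k = ((m:ℚ) - D*k)/D := by rw [← hx k]; field_simp
      have ha1 : -(n:ℤ) ≤ m - D*k := by
        have h1' := mul_le_mul_of_nonneg_right h1 hDpos.le
        rw [e, div_mul_cancel₀ _ hD0, div_mul_cancel₀ _ hD0] at h1'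
        exact_mod_cast h1'
      have ha2 : m - (D:ℤ)*k < 0 := by
        rw [e] at h2
        have : ((m:ℚ) - D*k) < 0 := by
          by_contra h
          exact absurd h2 (not_lt.mpr (div_nonneg (not_lt.mp h) hDpos.le))
        exact_mod_cast this
      have hzero : Ring.choose ((m - D*k + n : ℤ)) n = 0 := by
        rw [show (m - (D:ℤ)*k + (n:ℤ)) = ((m - D*k + n).toNat : ℤ) by omega,
          Ring.choose_natCast]
        have : (m - (D:ℤ)*k + n).toNat < n := by omega
        exact_mod_cast Nat.choose_eq_zero_of_lt this
      rw [hA]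
      simp only [hzero, mul_zero]
    · intro _
      have e2 : (D:ℚ) * ((k:ℚ) - α) - 1 = -((m:ℚ) - D*k) - 1 := by
        linear_combination -(hx k)
      rw [key, e2, ringChoose_reflect n ((m:ℚ) - D*k)]
      ring
end
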